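/- arXiv:2409.08896 — 14 statements merged into one kernel-verified Lean document; each statement's English description precedes it below -/
import Mathlib

section
/- Let g and ω be weights, let k ≥ 2 be an integer, let x ∈ X be a fixed point, and let λ be a real number with λ > T^g_{0,k-1}ω(x). Then there exists a finite (possibly empty) family of pairwise disjoint dyadic subintervals I_1, …, I_s of {0,1,…,k-1}, each a proper dyadic subinterval possessing a dyadic parent Ĩ_i, such that: (a) for each i = 1,…,s, λ < T^g_{I_i}ω(x) ≤ C(T,g,I_i,x)·λ, where C(T,g,I_i,x) = (Σ_{j∈I_i} g(T^j x))^{-1} · Σ_{j∈Ĩ_i} g(T^j x); and (b) if 0 ≤ j ≤ k-1 and j ∉ I_1 ∪ ⋯ ∪ I_s, then ω(T^j x) ≤ λ. -/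
open MeasureTheory Finset

/-- Dyadic subintervals `[a, b)` of `{0, 1, …, k-1}`: the full interval `[0, k)` is dyadic,
and every dyadic interval with at least two elements is split into its left child
(its first `⌈#I/2⌉` elements) and its right child (the remaining elements). -/
inductive IsDyadic (k : ℕ) : ℕ → ℕ → Prop
  | top : IsDyadic k 0 k
  | left {a b : ℕ} : IsDyadic k a b → a + 2 ≤ b → IsDyadic k a (a + (b - a + 1) / 2)
  | right {a b : ℕ} : IsDyadic k a b → a + 2 ≤ b → IsDyadic k (a + (b - a + 1) / 2) b

/-- `[a, b)` is a dyadic child of the dyadic interval `[pa, pb)` (its dyadic parent). -/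
def IsDyadicChild (k a b pa pb : ℕ) : Prop :=
  IsDyadic k pa pb ∧ pa + 2 ≤ pb ∧
    ((a = pa ∧ b = pa + (pb - pa + 1) / 2) ∨ (a = pa + (pb - pa + 1) / 2 ∧ b = pb))

/-!
Calderón–Zygmund stopping time along the dyadic tree of `[0, k)`. Starting from `[0, k)`, whose
average is at most `λ`, descend into both children of every interval whose average is at most `λ`,
and stop at a child as soon as its average exceeds `λ`. The stopped intervals are disjoint, and
since `ω g ≥ 0` the sum of `ω g` over a stopped interval is at most the one over its parent,
which is at most `λ` times the `g`-mass of the parent. A point never covered ends up in a singleton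
of average at most `λ`, and the average over `{j}` is `ω(T^j x)`.
-/

theorem IsDyadicChild.isDyadic {k a b pa pb : ℕ} (h : IsDyadicChild k a b pa pb) :
    IsDyadic k a b := by
  obtain ⟨hp, hlen, ⟨rfl, rfl⟩ | ⟨rfl, rfl⟩⟩ := h
  · exact hp.left hlen
  · exact hp.right hlen

noncomputable def weightedAvg (w f : ℕ → ℝ) (a b : ℕ) : ℝ :=
  (∑ j ∈ Ico a b, w j)⁻¹ * ∑ j ∈ Ico a b, f j * w j

structure IntervalWithParent where
  a : ℕ
  b : ℕ
  pa : ℕ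
  pb : ℕ

section StoppingTime

variable {k : ℕ} {w f : ℕ → ℝ} {lam : ℝ}

theorem weightedAvg_singleton {a : ℕ} (hw : w a ≠ 0) : weightedAvg w f a (a + 1) = f a := by
  rw [weightedAvg, Nat.Ico_succ_singleton, sum_singleton, sum_singleton, mul_comm (f a),
    inv_mul_cancel_left₀ hw]

theorem sum_mul_le_of_weightedAvg_le (hw : ∀ j, 0 < w j) {a b : ℕ}
    (havg : weightedAvg w f a b ≤ lam) :
    ∑ j ∈ Ico a b, f j * w j ≤ (∑ j ∈ Ico a b, w j) * lam := by
  rcases lt_or_ge a b with hab | hab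
  · have hS : 0 < ∑ j ∈ Ico a b, w j := sum_pos (fun j _ => hw j) (nonempty_Ico.2 hab)
    rwa [weightedAvg, inv_mul_le_iff₀ hS] at havg
  · simp [Ico_eq_empty_of_le hab]

theorem weightedAvg_le_of_subinterval (hw : ∀ j, 0 < w j) (hf : ∀ j, 0 ≤ f j)
    {a b a' b' : ℕ} (ha : a ≤ a') (hb : b' ≤ b) (havg : weightedAvg w f a b ≤ lam) :
    weightedAvg w f a' b' ≤ ((∑ j ∈ Ico a' b', w j)⁻¹ * ∑ j ∈ Ico a b, w j) * lam := by
  have hmono : ∑ j ∈ Ico a' b', f j * w j ≤ ∑ j ∈ Ico a b, f j * w j :=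
    sum_le_sum_of_subset_of_nonneg (Ico_subset_Ico ha hb)
      fun j _ _ => mul_nonneg (hf j) (hw j).le
  calc weightedAvg w f a' b'
      ≤ (∑ j ∈ Ico a' b', w j)⁻¹ * ((∑ j ∈ Ico a b, w j) * lam) :=
        mul_le_mul_of_nonneg_left (hmono.trans (sum_mul_le_of_weightedAvg_le hw havg))
          (inv_nonneg.2 (sum_nonneg fun j _ => (hw j).le))
    _ = _ := by ring

theorem le_of_weightedAvg_le_of_le_succ (hw : ∀ j, 0 < w j) {a b : ℕ} (hb : b ≤ a + 1)
    (havg : weightedAvg w f a b ≤ lam) {j : ℕ} (hj : j ∈ Ico a b) : f j ≤ lam := by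
  obtain ⟨rfl, rfl⟩ : j = a ∧ b = a + 1 := by rw [mem_Ico] at hj; omega
  rwa [weightedAvg_singleton (hw j).ne'] at havg

variable (k w f lam)

def IntervalWithParent.IsStopped (q : IntervalWithParent) : Prop :=
  IsDyadicChild k q.a q.b q.pa q.pb ∧ lam < weightedAvg w f q.a q.b ∧
    weightedAvg w f q.a q.b ≤ ((∑ j ∈ Ico q.a q.b, w j)⁻¹ * ∑ j ∈ Ico q.pa q.pb, w j) * lam

def IsStoppingFamily (a b : ℕ) (L : List IntervalWithParent) : Prop :=
  (∀ q ∈ L, q.IsStopped k w f lam ∧ a ≤ q.a ∧ q.b ≤ b) ∧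
    L.Pairwise (fun p q => Disjoint (Ico p.a p.b) (Ico q.a q.b)) ∧
    ∀ j ∈ Ico a b, (∀ q ∈ L, j ∉ Ico q.a q.b) → f j ≤ lam

variable {k w f lam}

theorem IsStoppingFamily.append {a m b : ℕ} {L₁ L₂ : List IntervalWithParent}
    (ham : a ≤ m) (hmb : m ≤ b) (h₁ : IsStoppingFamily k w f lam a m L₁)
    (h₂ : IsStoppingFamily k w f lam m b L₂) : IsStoppingFamily k w f lam a b (L₁ ++ L₂) := by
  obtain ⟨hsel₁, hdisj₁, hcov₁⟩ := h₁
  obtain ⟨hsel₂, hdisj₂, hcov₂⟩ := h₂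
  refine ⟨fun q hq => ?_, List.pairwise_append.2 ⟨hdisj₁, hdisj₂, fun p hp q hq => ?_⟩,
    fun j hj hnot => ?_⟩
  · rcases List.mem_append.1 hq with hq | hq
    · obtain ⟨hq, ha, hb⟩ := hsel₁ q hq
      exact ⟨hq, ha, hb.trans hmb⟩
    · obtain ⟨hq, ha, hb⟩ := hsel₂ q hq
      exact ⟨hq, ham.trans ha, hb⟩
  · have hpm := (hsel₁ p hp).2.2
    have hmq := (hsel₂ q hq).2.1
    exact disjoint_left.2 fun j hjp hjq => by rw [mem_Ico] at hjp hjq; omega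
  · rw [mem_Ico] at hj
    rcases lt_or_ge j m with hjm | hjm
    · exact hcov₁ j (mem_Ico.2 ⟨hj.1, hjm⟩) fun q hq => hnot q (List.mem_append_left _ hq)
    · exact hcov₂ j (mem_Ico.2 ⟨hjm, hj.2⟩) fun q hq => hnot q (List.mem_append_right _ hq)

/-- A child either is stopped itself, or has average at most `λ` and is handled recursively. -/
theorem exists_isStoppingFamily_of_isDyadicChild (hw : ∀ j, 0 < w j) (hf : ∀ j, 0 ≤ f j)
    {a b pa pb : ℕ} (hchild : IsDyadicChild k a b pa pb) (havg : weightedAvg w f pa pb ≤ lam)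
    (ih : weightedAvg w f a b ≤ lam → ∃ L, IsStoppingFamily k w f lam a b L) :
    ∃ L, IsStoppingFamily k w f lam a b L := by
  by_cases hab : weightedAvg w f a b ≤ lam
  · exact ih hab
  have hsub : pa ≤ a ∧ b ≤ pb := by obtain ⟨-, hlen, h | h⟩ := hchild <;> omega
  refine ⟨[⟨a, b, pa, pb⟩], ?_, List.pairwise_singleton _ _, ?_⟩
  · simp only [List.mem_singleton, forall_eq]
    exact ⟨⟨hchild, lt_of_not_ge hab,
      weightedAvg_le_of_subinterval hw hf hsub.1 hsub.2 havg⟩, le_rfl, le_rfl⟩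
  · simp only [List.mem_singleton, forall_eq]
    exact fun j hj hnot => absurd hj hnot

theorem IsDyadic.exists_isStoppingFamily (hw : ∀ j, 0 < w j) (hf : ∀ j, 0 ≤ f j) {a b : ℕ}
    (h : IsDyadic k a b) (havg : weightedAvg w f a b ≤ lam) :
    ∃ L, IsStoppingFamily k w f lam a b L := by
  induction hn : b - a using Nat.strong_induction_on generalizing a b with
  | _ n ih =>
  rcases le_or_gt b (a + 1) with hb | hb
  · exact ⟨[], by simp, List.Pairwise.nil,
      fun j hj _ => le_of_weightedAvg_le_of_le_succ hw hb havg hj⟩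
  set m := a + (b - a + 1) / 2
  have hl : IsDyadicChild k a m a b := ⟨h, hb, .inl ⟨rfl, rfl⟩⟩
  have hr : IsDyadicChild k m b a b := ⟨h, hb, .inr ⟨rfl, rfl⟩⟩
  obtain ⟨L₁, h₁⟩ := exists_isStoppingFamily_of_isDyadicChild hw hf hl havg
    fun hl' => ih (m - a) (by omega) hl.isDyadic hl' rfl
  obtain ⟨L₂, h₂⟩ := exists_isStoppingFamily_of_isDyadicChild hw hf hr havg
    fun hr' => ih (b - m) (by omega) hr.isDyadic hr' rfl
  exact ⟨L₁ ++ L₂, h₁.append (by omega) (by omega) h₂⟩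

end StoppingTime

theorem stmt0_general {X : Type*} (T : X → X) (g ω : X → ℝ) (hgpos : ∀ x, 0 < g x)
    (hωpos : ∀ x, 0 < ω x) (k : ℕ) (x : X) (lam : ℝ)
    (hlam : (∑ i ∈ Finset.range k, g (T^[i] x))⁻¹ *
      ∑ i ∈ Finset.range k, ω (T^[i] x) * g (T^[i] x) < lam) :
    ∃ (s : ℕ) (a b pa pb : Fin s → ℕ),
      (∀ i, IsDyadicChild k (a i) (b i) (pa i) (pb i)) ∧
      (∀ i j, i ≠ j → Disjoint (Finset.Ico (a i) (b i)) (Finset.Ico (a j) (b j))) ∧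
      (∀ i,
        lam < (∑ j ∈ Finset.Ico (a i) (b i), g (T^[j] x))⁻¹ *
            ∑ j ∈ Finset.Ico (a i) (b i), ω (T^[j] x) * g (T^[j] x) ∧
        (∑ j ∈ Finset.Ico (a i) (b i), g (T^[j] x))⁻¹ *
            ∑ j ∈ Finset.Ico (a i) (b i), ω (T^[j] x) * g (T^[j] x) ≤
          ((∑ j ∈ Finset.Ico (a i) (b i), g (T^[j] x))⁻¹ *
            ∑ j ∈ Finset.Ico (pa i) (pb i), g (T^[j] x)) * lam) ∧
      (∀ j, j < k → (∀ i, j ∉ Finset.Ico (a i) (b i)) → ω (T^[j] x) ≤ lam) := by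
  obtain ⟨L, hsel, hdisj, hcov⟩ := (IsDyadic.top (k := k)).exists_isStoppingFamily
    (w := fun j => g (T^[j] x)) (f := fun j => ω (T^[j] x)) (lam := lam)
    (fun j => hgpos _) (fun j => (hωpos _).le)
    (by simpa only [weightedAvg, range_eq_Ico] using hlam.le)
  have hstop (i : Fin L.length) := (hsel _ (L.get_mem i)).1
  refine ⟨L.length, fun i => (L.get i).a, fun i => (L.get i).b, fun i => (L.get i).pa,
    fun i => (L.get i).pb, fun i => (hstop i).1, fun i j hij => ?_, fun i => (hstop i).2,
    fun j hj hnot => hcov j (mem_Ico.2 ⟨j.zero_le, hj⟩) fun q hq => ?_⟩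
  · rcases lt_or_gt_of_ne hij with h | h
    · exact hdisj.rel_get_of_lt h
    · exact (hdisj.rel_get_of_lt h).symm
  · obtain ⟨i, rfl⟩ := List.mem_iff_get.1 hq
    exact hnot i

theorem stmt0 {X : Type*} [MeasurableSpace X] (μ : Measure X)
    [IsProbabilityMeasure μ] [NullSingletonClass μ] (hcomp : μ.IsComplete)
    (T : X → X) (hTbij : Function.Bijective T) (hTerg : Ergodic T μ)
    (g ω : X → ℝ) (hg : Measurable g) (hgpos : ∀ x, 0 < g x)
    (hω : Measurable ω) (hωpos : ∀ x, 0 < ω x)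
    (k : ℕ) (hk : 2 ≤ k) (x : X) (lam : ℝ)
    (hlam : (∑ i ∈ Finset.range k, g (T^[i] x))⁻¹ *
      ∑ i ∈ Finset.range k, ω (T^[i] x) * g (T^[i] x) < lam) :
    ∃ (s : ℕ) (a b pa pb : Fin s → ℕ),
      (∀ i, IsDyadicChild k (a i) (b i) (pa i) (pb i)) ∧
      (∀ i j, i ≠ j → Disjoint (Finset.Ico (a i) (b i)) (Finset.Ico (a j) (b j))) ∧
      (∀ i,
        lam < (∑ j ∈ Finset.Ico (a i) (b i), g (T^[j] x))⁻¹ *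
            ∑ j ∈ Finset.Ico (a i) (b i), ω (T^[j] x) * g (T^[j] x) ∧
        (∑ j ∈ Finset.Ico (a i) (b i), g (T^[j] x))⁻¹ *
            ∑ j ∈ Finset.Ico (a i) (b i), ω (T^[j] x) * g (T^[j] x) ≤
          ((∑ j ∈ Finset.Ico (a i) (b i), g (T^[j] x))⁻¹ *
            ∑ j ∈ Finset.Ico (pa i) (pb i), g (T^[j] x)) * lam) ∧
      (∀ j, j < k → (∀ i, j ∉ Finset.Ico (a i) (b i)) → ω (T^[j] x) ≤ lam) :=
  stmt0_general T g ω hgpos hωpos k x lam hlam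
end

section
/- Let ω be a weight, let k ≥ 2 be an integer, let x ∈ X be a fixed point, and let λ be a real number with λ > (1/k) Σ_{i=0}^{k-1} ω(T^i x). Then there exists a finite (possibly empty) family of pairwise disjoint dyadic subintervals I_1, …, I_s of {0,1,…,k-1} such that: (a) for each i = 1,…,s, λ < (#I_i)^{-1} Σ_{j∈I_i} ω(T^j x) ≤ 3λ; and (b) if 0 ≤ j ≤ k-1 and j ∉ I_1 ∪ ⋯ ∪ I_s, then ω(T^j x) ≤ λ. -/
open MeasureTheory Finset

/-!
Calderón–Zygmund stopping time: descend the dyadic tree from `[0, k)`, where the average of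
`j ↦ ω (T^[j] x)` is at most `λ`, and stop at the first interval whose average exceeds `λ`.
A dyadic child of an interval of length `n ≥ 2` has at least `⌊n/2⌋ ≥ n/3` elements, so by
positivity of `ω` its average is at most three times that of its parent, hence at most `3λ`.
A point that is never covered ends in a singleton interval whose average, its value, is `≤ λ`.
-/

namespace CalderonZygmund

variable {f : ℕ → ℝ} {lam : ℝ} {k a b c d m : ℕ}

noncomputable def icoAverage (f : ℕ → ℝ) (a b : ℕ) : ℝ :=
  (#(Ico a b) : ℝ)⁻¹ * ∑ j ∈ Ico a b, f j

theorem icoAverage_le_three_mul_of_le (hf : ∀ n, 0 ≤ f n) (hac : a ≤ c) (hdb : d ≤ b)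
    (hcd : c < d) (hsize : b - a ≤ 3 * (d - c)) :
    icoAverage f c d ≤ 3 * icoAverage f a b := by
  have hsum : ∑ j ∈ Ico c d, f j ≤ ∑ j ∈ Ico a b, f j :=
    sum_le_sum_of_subset_of_nonneg (Ico_subset_Ico hac hdb) fun j _ _ => hf j
  have hnonneg : 0 ≤ ∑ j ∈ Ico a b, f j := sum_nonneg fun j _ => hf j
  have hlen : ((b - a : ℕ) : ℝ) ≤ 3 * ((d - c : ℕ) : ℝ) := by exact_mod_cast hsize
  have hdc : (0 : ℝ) < ((d - c : ℕ) : ℝ) := by exact_mod_cast Nat.sub_pos_of_lt hcd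
  have hba : (0 : ℝ) < ((b - a : ℕ) : ℝ) := by exact_mod_cast (by omega : 0 < b - a)
  unfold icoAverage
  rw [Nat.card_Ico, Nat.card_Ico]
  calc ((d - c : ℕ) : ℝ)⁻¹ * ∑ j ∈ Ico c d, f j
      ≤ ((d - c : ℕ) : ℝ)⁻¹ * ∑ j ∈ Ico a b, f j := by gcongr
    _ ≤ 3 * ((b - a : ℕ) : ℝ)⁻¹ * ∑ j ∈ Ico a b, f j := by
        gcongr
        rw [← div_eq_mul_inv, le_div_iff₀ hba]
        field_simp
        linarith
    _ = 3 * (((b - a : ℕ) : ℝ)⁻¹ * ∑ j ∈ Ico a b, f j) := mul_assoc _ _ _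

/-- A pair `p ∈ S` stands for the interval `[p.1, p.2)`. -/
structure IsCZFamily (f : ℕ → ℝ) (lam : ℝ) (k c d : ℕ) (S : Finset (ℕ × ℕ)) : Prop where
  isDyadic : ∀ p ∈ S, IsDyadic k p.1 p.2
  le_fst : ∀ p ∈ S, c ≤ p.1
  snd_le : ∀ p ∈ S, p.2 ≤ d
  lt_icoAverage : ∀ p ∈ S, lam < icoAverage f p.1 p.2
  icoAverage_le : ∀ p ∈ S, icoAverage f p.1 p.2 ≤ 3 * lam
  pairwiseDisjoint : (S : Set (ℕ × ℕ)).PairwiseDisjoint fun p => Ico p.1 p.2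
  le_of_forall_notMem : ∀ j ∈ Ico c d, (∀ p ∈ S, j ∉ Ico p.1 p.2) → f j ≤ lam

namespace IsCZFamily

theorem empty (h : ∀ j ∈ Ico c d, f j ≤ lam) : IsCZFamily f lam k c d ∅ where
  isDyadic := by simp
  le_fst := by simp
  snd_le := by simp
  lt_icoAverage := by simp
  icoAverage_le := by simp
  pairwiseDisjoint := by simp
  le_of_forall_notMem j hj _ := h j hj

theorem singleton (hcd : IsDyadic k c d) (hlt : lam < icoAverage f c d)
    (hle : icoAverage f c d ≤ 3 * lam) : IsCZFamily f lam k c d {(c, d)} where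
  isDyadic := by simpa using hcd
  le_fst := by simp
  snd_le := by simp
  lt_icoAverage := by simpa using hlt
  icoAverage_le := by simpa using hle
  pairwiseDisjoint := by simp
  le_of_forall_notMem j hj h := absurd hj (h (c, d) (mem_singleton_self _))

theorem union {S T : Finset (ℕ × ℕ)} (hS : IsCZFamily f lam k a m S)
    (hT : IsCZFamily f lam k m b T) (ham : a ≤ m) (hmb : m ≤ b) :
    IsCZFamily f lam k a b (S ∪ T) where
  isDyadic p hp := (mem_union.1 hp).elim (hS.isDyadic p) (hT.isDyadic p)
  le_fst p hp := (mem_union.1 hp).elim (hS.le_fst p) fun h => ham.trans (hT.le_fst p h)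
  snd_le p hp := (mem_union.1 hp).elim (fun h => (hS.snd_le p h).trans hmb) (hT.snd_le p)
  lt_icoAverage p hp := (mem_union.1 hp).elim (hS.lt_icoAverage p) (hT.lt_icoAverage p)
  icoAverage_le p hp := (mem_union.1 hp).elim (hS.icoAverage_le p) (hT.icoAverage_le p)
  pairwiseDisjoint := by
    rw [coe_union]
    refine hS.pairwiseDisjoint.union hT.pairwiseDisjoint fun p hp q hq _ => ?_
    have hpm := hS.snd_le p hp
    have hmq := hT.le_fst q hq
    exact disjoint_left.2 fun j hjp hjq => by
      rw [mem_Ico] at hjp hjq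
      omega
  le_of_forall_notMem j hj h := by
    rcases lt_or_ge j m with hjm | hjm
    · exact hS.le_of_forall_notMem j (mem_Ico.2 ⟨(mem_Ico.1 hj).1, hjm⟩)
        fun p hp => h p (mem_union_left _ hp)
    · exact hT.le_of_forall_notMem j (mem_Ico.2 ⟨hjm, (mem_Ico.1 hj).2⟩)
        fun p hp => h p (mem_union_right _ hp)

end IsCZFamily

theorem exists_isCZFamily (hf : ∀ n, 0 ≤ f n) (hab : IsDyadic k a b)
    (havg : icoAverage f a b ≤ lam) : ∃ S, IsCZFamily f lam k a b S := by
  induction hn : b - a using Nat.strong_induction_on generalizing a b with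
  | _ n ih =>
  subst hn
  by_cases hsmall : b ≤ a + 1
  · refine ⟨∅, .empty fun j hj => ?_⟩
    obtain ⟨rfl, rfl⟩ : j = a ∧ b = a + 1 := by rw [mem_Ico] at hj; omega
    simpa [icoAverage] using havg
  · have child : ∀ {c d}, IsDyadic k c d → a ≤ c → d ≤ b → c < d → d - c < b - a →
        b - a ≤ 3 * (d - c) → ∃ S, IsCZFamily f lam k c d S := by
      intro c d hcd hac hdb hlt hshort hsize
      by_cases h : icoAverage f c d ≤ lam
      · exact ih _ hshort hcd h rfl
      · have hle := icoAverage_le_three_mul_of_le hf hac hdb hlt hsize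
        exact ⟨_, .singleton hcd (not_le.1 h) (by linarith)⟩
    obtain ⟨S, hS⟩ := child (hab.left (by omega)) le_rfl (by omega) (by omega) (by omega)
      (by omega)
    obtain ⟨T, hT⟩ := child (hab.right (by omega)) (by omega) le_rfl (by omega) (by omega)
      (by omega)
    exact ⟨S ∪ T, hS.union hT (by omega) (by omega)⟩

end CalderonZygmund

open CalderonZygmund

theorem stmt1_general {X : Type*}
    (T : X → X)
    (ω : X → ℝ) (hωpos : ∀ x, 0 < ω x)
    (k : ℕ) (x : X) (lam : ℝ)
    (hlam : (k : ℝ)⁻¹ * ∑ i ∈ Finset.range k, ω (T^[i] x) < lam) :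
    ∃ (s : ℕ) (a b : Fin s → ℕ),
      (∀ i, IsDyadic k (a i) (b i)) ∧
      (∀ i j, i ≠ j → Disjoint (Finset.Ico (a i) (b i)) (Finset.Ico (a j) (b j))) ∧
      (∀ i,
        lam < ((Finset.Ico (a i) (b i)).card : ℝ)⁻¹ *
            ∑ j ∈ Finset.Ico (a i) (b i), ω (T^[j] x) ∧
        ((Finset.Ico (a i) (b i)).card : ℝ)⁻¹ *
            ∑ j ∈ Finset.Ico (a i) (b i), ω (T^[j] x) ≤ 3 * lam) ∧
      (∀ j, j < k → (∀ i, j ∉ Finset.Ico (a i) (b i)) → ω (T^[j] x) ≤ lam) := by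
  have havg : icoAverage (fun j => ω (T^[j] x)) 0 k ≤ lam := by
    unfold icoAverage
    rw [← range_eq_Ico, card_range]
    exact hlam.le
  obtain ⟨S, hS⟩ := exists_isCZFamily (fun j => (hωpos _).le) IsDyadic.top havg
  let e := S.equivFin.symm
  refine ⟨#S, fun i => (e i).1.1, fun i => (e i).1.2, fun i => hS.isDyadic _ (e i).2,
    fun i j hij => hS.pairwiseDisjoint (e i).2 (e j).2 fun h => hij (e.injective (Subtype.ext h)),
    fun i => ⟨hS.lt_icoAverage _ (e i).2, hS.icoAverage_le _ (e i).2⟩,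
    fun j hj hnot => hS.le_of_forall_notMem j (by simpa using hj) fun p hp => ?_⟩
  simpa [e] using hnot (S.equivFin ⟨p, hp⟩)

theorem stmt1 {X : Type*} [MeasurableSpace X] (μ : Measure X)
    [IsProbabilityMeasure μ] [NullSingletonClass μ] (hcomp : μ.IsComplete)
    (T : X → X) (hTbij : Function.Bijective T) (hTerg : Ergodic T μ)
    (ω : X → ℝ) (hω : Measurable ω) (hωpos : ∀ x, 0 < ω x)
    (k : ℕ) (hk : 2 ≤ k) (x : X) (lam : ℝ)
    (hlam : (k : ℝ)⁻¹ * ∑ i ∈ Finset.range k, ω (T^[i] x) < lam) :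
    ∃ (s : ℕ) (a b : Fin s → ℕ),
      (∀ i, IsDyadic k (a i) (b i)) ∧
      (∀ i j, i ≠ j → Disjoint (Finset.Ico (a i) (b i)) (Finset.Ico (a j) (b j))) ∧
      (∀ i,
        lam < ((Finset.Ico (a i) (b i)).card : ℝ)⁻¹ *
            ∑ j ∈ Finset.Ico (a i) (b i), ω (T^[j] x) ∧
        ((Finset.Ico (a i) (b i)).card : ℝ)⁻¹ *
            ∑ j ∈ Finset.Ico (a i) (b i), ω (T^[j] x) ≤ 3 * lam) ∧
      (∀ j, j < k → (∀ i, j ∉ Finset.Ico (a i) (b i)) → ω (T^[j] x) ≤ lam) :=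
  stmt1_general T ω hωpos k x lam hlam
end

section
/- Let ω be a weight. If ω ∈ A^avg_∞, then ω ∈ A^λ_∞. -/
open MeasureTheory Finset

/-- The ergodic average `T_{0,k-1}ω(x) = (1/k) ∑_{i=0}^{k-1} ω(Tⁱx)`. -/
noncomputable def ergAvg {X : Type*} (T : X → X) (ω : X → ℝ) (k : ℕ) (x : X) : ℝ :=
  (k : ℝ)⁻¹ * ∑ i ∈ Finset.range k, ω (T^[i] x)

/-- `ω ∈ A^avg_∞`. -/
def MemAavg {X : Type*} [MeasurableSpace X] (μ : Measure X) (T : X → X) (ω : X → ℝ) : Prop :=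
  ∃ γ δ : ℝ, 0 < γ ∧ γ < 1 ∧ 0 < δ ∧ δ < 1 ∧
    ∀ᵐ x ∂μ, ∀ k : ℕ, 0 < k →
      ((((Finset.range k).filter fun j => ω (T^[j] x) ≤ γ * ergAvg T ω k x).card : ℝ) / k ≤ δ)

/-- `ω ∈ A^λ_∞`. -/
def MemAlam {X : Type*} [MeasurableSpace X] (μ : Measure X) (T : X → X) (ω : X → ℝ) : Prop :=
  ∃ C β : ℝ, 0 < C ∧ 0 < β ∧
    ∀ᵐ x ∂μ, ∀ k : ℕ, 0 < k → ∀ lam : ℝ, ergAvg T ω k x < lam →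
      ∑ i ∈ (Finset.range k).filter (fun i => lam < ω (T^[i] x)), ω (T^[i] x) ≤
        C * lam * (((Finset.range k).filter fun i => β * lam < ω (T^[i] x)).card : ℝ)

/-!
A Calderón–Zygmund stopping argument along each orbit. Bisect a window of the orbit whose mean is
at most `λ` (each half is at least a third of it), and stop at a piece as soon as its mean exceeds
`λ`; since its parent had mean `≤ λ`, the stopped piece has mean in `(λ, 3λ]`. By `A^avg_∞`, at
least a `(1 - δ)`-fraction of the terms of a stopped piece exceed `γ` times its mean, hence exceed
`γλ`, so the mass of the piece is at most `3λℓ ≤ 3/(1-δ) · λ · #{terms > γλ}`. Pieces never stopped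
shrink to single terms `≤ λ`, which carry no mass above `λ`. A stopped piece starts at a later
point of the orbit, which is why the hypothesis is needed at every `Tⁿx`, i.e. off a null set.
-/

namespace Finset

theorem sum_filter_range_add {M : Type*} [AddCommMonoid M] (p : ℕ → Prop) [DecidablePred p]
    (f : ℕ → M) (m n : ℕ) :
    ∑ i ∈ range (m + n) with p i, f i =
      ∑ i ∈ range m with p i, f i + ∑ i ∈ range n with p (m + i), f (m + i) := by
  simp only [sum_filter, sum_range_add]

theorem card_filter_range_add (p : ℕ → Prop) [DecidablePred p] (m n : ℕ) :
    #{i ∈ range (m + n) | p i} = #{i ∈ range m | p i} + #{i ∈ range n | p (m + i)} := by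
  simp only [card_filter, sum_range_add]

end Finset

noncomputable def seqAvg (a : ℕ → ℝ) (k : ℕ) : ℝ :=
  (k : ℝ)⁻¹ * ∑ i ∈ range k, a i

def FewBelowMean (γ δ : ℝ) (a : ℕ → ℝ) : Prop :=
  ∀ k : ℕ, 0 < k → (#{j ∈ range k | a j ≤ γ * seqAvg a k} : ℝ) / k ≤ δ

section StoppingTime

variable {a : ℕ → ℝ} {γ δ lam : ℝ} {k : ℕ}

theorem FewBelowMean.mul_card_le_card_filter_lt (hfew : FewBelowMean γ δ a) (hγ : 0 ≤ γ)
    (hk : 0 < k) (hlam : lam * k < ∑ i ∈ range k, a i) :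
    (1 - δ) * k ≤ #{i ∈ range k | γ * lam < a i} := by
  have hkR : (0 : ℝ) < k := Nat.cast_pos.2 hk
  have hlam_avg : lam < seqAvg a k := (lt_inv_mul_iff₀ hkR).2 (by linarith)
  have hbelow : (#{j ∈ range k | a j ≤ γ * seqAvg a k} : ℝ) ≤ δ * k :=
    (div_le_iff₀ hkR).1 (hfew k hk)
  have hsplit : (#{j ∈ range k | a j ≤ γ * seqAvg a k} : ℝ) +
      #{j ∈ range k | ¬a j ≤ γ * seqAvg a k} = k := by
    exact_mod_cast (card_filter_add_card_filter_not _).trans (card_range k)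
  have hsub : {j ∈ range k | ¬a j ≤ γ * seqAvg a k} ⊆ {i ∈ range k | γ * lam < a i} :=
    monotone_filter_right _ fun j _ hj =>
      (mul_le_mul_of_nonneg_left hlam_avg.le hγ).trans_lt (not_le.1 hj)
  have := (Nat.cast_le (α := ℝ)).2 (card_le_card hsub)
  linarith

theorem sum_filter_lt_le_of_lt_sum_le (ha : ∀ i, 0 ≤ a i) (hfew : FewBelowMean γ δ a)
    (hγ : 0 ≤ γ) (hδ : δ < 1) (hlam : 0 ≤ lam) (hk : 0 < k)
    (hlt : lam * k < ∑ i ∈ range k, a i) (hle : ∑ i ∈ range k, a i ≤ 3 * (lam * k)) :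
    ∑ i ∈ range k with lam < a i, a i ≤ 3 / (1 - δ) * lam * #{i ∈ range k | γ * lam < a i} := by
  have hδ' : 0 < 1 - δ := sub_pos.2 hδ
  calc ∑ i ∈ range k with lam < a i, a i
      ≤ ∑ i ∈ range k, a i := sum_le_sum_of_subset_of_nonneg (filter_subset _ _) fun i _ _ => ha i
    _ ≤ 3 / (1 - δ) * lam * ((1 - δ) * k) := by
      rwa [show 3 / (1 - δ) * lam * ((1 - δ) * k) = 3 * (lam * k) by field_simp]
    _ ≤ 3 / (1 - δ) * lam * #{i ∈ range k | γ * lam < a i} := by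
      gcongr
      exact hfew.mul_card_le_card_filter_lt hγ hk hlt

theorem sum_filter_lt_le_of_sum_le (ha : ∀ i, 0 ≤ a i)
    (hfew : ∀ n, FewBelowMean γ δ fun j => a (n + j)) (hγ : 0 ≤ γ) (hδ : δ < 1) (hlam : 0 ≤ lam)
    {ℓ : ℕ} (hsum : ∑ i ∈ range ℓ, a i ≤ lam * ℓ) :
    ∑ i ∈ range ℓ with lam < a i, a i ≤ 3 / (1 - δ) * lam * #{i ∈ range ℓ | γ * lam < a i} := by
  induction ℓ using Nat.strong_induction_on generalizing a with
  | _ ℓ IH =>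
  obtain hℓ | hℓ := lt_or_ge ℓ 2
  · have hnone : {i ∈ range ℓ | lam < a i} = ∅ := by
      refine filter_eq_empty_iff.2 fun i hi => not_lt.2 ?_
      interval_cases ℓ <;> simp_all
    rw [hnone, sum_empty]
    positivity
  obtain ⟨ℓ₁, ℓ₂, rfl, h₁, h₂⟩ : ∃ ℓ₁ ℓ₂, ℓ = ℓ₁ + ℓ₂ ∧ ℓ ≤ 3 * ℓ₁ ∧ ℓ ≤ 3 * ℓ₂ :=
    ⟨ℓ / 2, ℓ - ℓ / 2, by omega, by omega, by omega⟩
  have piece : ∀ (b : ℕ → ℝ) (m : ℕ), 0 < m → m < ℓ₁ + ℓ₂ → (∀ i, 0 ≤ b i) →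
      (∀ n, FewBelowMean γ δ fun j => b (n + j)) → ∑ i ∈ range m, b i ≤ 3 * (lam * m) →
      ∑ i ∈ range m with lam < b i, b i ≤
        3 / (1 - δ) * lam * #{i ∈ range m | γ * lam < b i} := by
    intro b m hm hmℓ hb hbfew hbsum
    obtain hle | hlt := le_or_gt (∑ i ∈ range m, b i) (lam * m)
    · exact IH m hmℓ hb hbfew hle
    · exact sum_filter_lt_le_of_lt_sum_le hb (by simpa using hbfew 0) hγ hδ hlam hm hlt hbsum
  rw [sum_range_add] at hsum
  have hnonneg₁ := sum_nonneg fun i (_ : i ∈ range ℓ₁) => ha i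
  have hnonneg₂ := sum_nonneg fun i (_ : i ∈ range ℓ₂) => ha (ℓ₁ + i)
  have hℓ₁ : lam * (ℓ₁ + ℓ₂ : ℕ) ≤ 3 * (lam * ℓ₁) := by
    rw [← mul_left_comm]; gcongr; exact_mod_cast h₁
  have hℓ₂ : lam * (ℓ₁ + ℓ₂ : ℕ) ≤ 3 * (lam * ℓ₂) := by
    rw [← mul_left_comm]; gcongr; exact_mod_cast h₂
  have B₁ := piece a ℓ₁ (by omega) (by omega) ha hfew (by linarith)
  have B₂ := piece (fun j => a (ℓ₁ + j)) ℓ₂ (by omega) (by omega) (fun i => ha _)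
    (fun n => by simpa only [add_assoc] using hfew (ℓ₁ + n)) (by linarith)
  rw [sum_filter_range_add, card_filter_range_add, Nat.cast_add, mul_add]
  exact add_le_add B₁ B₂

theorem sum_filter_lt_le_of_seqAvg_lt (ha : ∀ i, 0 ≤ a i)
    (hfew : ∀ n, FewBelowMean γ δ fun j => a (n + j)) (hγ : 0 ≤ γ) (hδ : δ < 1) (hk : 0 < k)
    (hlam : seqAvg a k < lam) :
    ∑ i ∈ range k with lam < a i, a i ≤ 3 / (1 - δ) * lam * #{i ∈ range k | γ * lam < a i} := by
  have hkR : (0 : ℝ) < k := Nat.cast_pos.2 hk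
  have hsum : ∑ i ∈ range k, a i ≤ lam * k := ((inv_mul_lt_iff₀' hkR).1 hlam).le
  have hlam₀ : 0 ≤ lam :=
    (mul_nonneg (inv_nonneg.2 hkR.le) (sum_nonneg fun i _ => ha i)).trans hlam.le
  exact sum_filter_lt_le_of_sum_le ha hfew hγ hδ hlam₀ hsum

end StoppingTime

theorem MeasureTheory.Measure.QuasiMeasurePreserving.ae_forall_iterate {X : Type*}
    [MeasurableSpace X] {μ : Measure X} {T : X → X} (hT : Measure.QuasiMeasurePreserving T μ μ)
    {p : X → Prop} (hp : ∀ᵐ x ∂μ, p x) : ∀ᵐ x ∂μ, ∀ n, p (T^[n] x) :=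
  ae_all_iff.2 fun n => (hT.iterate n).ae hp

theorem stmt2_general {X : Type*} [MeasurableSpace X] (μ : Measure X)
    (T : X → X) (hTerg : Ergodic T μ)
    (ω : X → ℝ) (hωpos : ∀ x, 0 < ω x)
    (h : MemAavg μ T ω) :
    MemAlam μ T ω := by
  obtain ⟨γ, δ, hγ, -, -, hδ, hae⟩ := h
  refine ⟨3 / (1 - δ), γ, div_pos three_pos (sub_pos.2 hδ), hγ, ?_⟩
  filter_upwards [hTerg.quasiMeasurePreserving.ae_forall_iterate hae] with x hx k hk lam hlam
  have horbit : ∀ n, FewBelowMean γ δ fun j => ω (T^[n + j] x) := fun n => by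
    have hshift : (fun j => ω (T^[n + j] x)) = fun j => ω (T^[j] (T^[n] x)) := by
      funext j
      rw [add_comm, Function.iterate_add_apply]
    exact hshift ▸ hx n
  exact sum_filter_lt_le_of_seqAvg_lt (a := fun i => ω (T^[i] x)) (fun i => (hωpos _).le)
    horbit hγ.le hδ hk hlam

theorem stmt2 {X : Type*} [MeasurableSpace X] (μ : Measure X)
    [IsProbabilityMeasure μ] [NullSingletonClass μ] (hcomp : μ.IsComplete)
    (T : X → X) (hTbij : Function.Bijective T) (hTerg : Ergodic T μ)
    (ω : X → ℝ) (hω : Measurable ω) (hωpos : ∀ x, 0 < ω x)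
    (h : MemAavg μ T ω) :
    MemAlam μ T ω :=
  stmt2_general μ T hTerg ω hωpos h
end

section
/- Let ω be a weight. If ω ∈ A^λ_∞, then there exist constants C, q > 1 such that ω ∈ RH_q, i.e., ω satisfies the reverse Hölder inequality ((1/k) Σ_{i=0}^{k-1} ω(T^i x)^q)^{1/q} ≤ C·(1/k) Σ_{i=0}^{k-1} ω(T^i x) for a.e. x ∈ X and every positive integer k. -/
open MeasureTheory Finset

/-- `ω ∈ RH_q` with constant `C`. -/
def MemRH {X : Type*} [MeasurableSpace X] (μ : Measure X) (T : X → X) (ω : X → ℝ)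
    (C q : ℝ) : Prop :=
  ∀ᵐ x ∂μ, ∀ k : ℕ, 0 < k →
    ((k : ℝ)⁻¹ * ∑ i ∈ Finset.range k, ω (T^[i] x) ^ q) ^ (1 / q) ≤
      C * ((k : ℝ)⁻¹ * ∑ i ∈ Finset.range k, ω (T^[i] x))

/-!
Fix `x` and `k`, write `wᵢ = ω(Tⁱx)` and let `A` be their average. For `q = 1 + δ` the layer-cake
formula `w^δ ≤ A^δ + δ ∫_A^w t^(δ-1) dt` gives
`∑ wᵢ^q ≤ k A^q + δ ∫_A^∞ t^(δ-1) ∑_{wᵢ > t} wᵢ dt`. At every level `t > A` the `A^λ_∞` condition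
bounds the inner sum by `C t #{wᵢ > β t}`, and integrating back yields
`∑ wᵢ^q ≤ k A^q + δ C β^(-q) / q ∑ wᵢ^q`. As `δ → 0` the last coefficient tends to `0`, so for
small `δ` it can be absorbed into the left-hand side: `∑ wᵢ^q ≤ 2 k A^q`, which is `RH_q` with
constant `2`.
-/

section

open Set

theorem integrableOn_Ioo_rpow {r : ℝ} (hr : -1 < r) (a b : ℝ) :
    IntegrableOn (fun t : ℝ => t ^ r) (Ioo a b) :=
  ((intervalIntegrable_iff' (μ := volume)).1
    (intervalIntegral.intervalIntegrable_rpow' hr)).mono_set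
    (Ioo_subset_Icc_self.trans Icc_subset_uIcc)

theorem integrableOn_Ioi_indicator_Iio {f : ℝ → ℝ} {a b : ℝ} (hf : IntegrableOn f (Ioo a b)) :
    IntegrableOn ((Iio b).indicator f) (Ioi a) := by
  rw [IntegrableOn, integrable_indicator_iff measurableSet_Iio, IntegrableOn,
    Measure.restrict_restrict measurableSet_Iio, Iio_inter_Ioi]
  exact hf

theorem setIntegral_Ioi_indicator_Iio (f : ℝ → ℝ) (a b : ℝ) :
    ∫ t in Ioi a, (Iio b).indicator f t = ∫ t in Ioo a b, f t := by
  rw [integral_indicator measurableSet_Iio, Measure.restrict_restrict measurableSet_Iio,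
    Iio_inter_Ioi]

theorem setIntegral_Ioo_rpow_le {r a b : ℝ} (hr : -1 < r) (ha : 0 ≤ a) (hb : 0 ≤ b) :
    ∫ t in Ioo a b, t ^ r ≤ b ^ (r + 1) / (r + 1) := by
  calc ∫ t in Ioo a b, t ^ r ≤ ∫ t in Ioo 0 b, t ^ r := by
        refine setIntegral_mono_set (integrableOn_Ioo_rpow hr 0 b) ?_
          (Ioo_subset_Ioo_left ha).eventuallyLE
        filter_upwards [ae_restrict_mem measurableSet_Ioo] with t ht
        exact Real.rpow_nonneg ht.1.le r
    _ = b ^ (r + 1) / (r + 1) := by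
        rw [← integral_Ioc_eq_integral_Ioo, ← intervalIntegral.integral_of_le hb,
          integral_rpow (Or.inl hr), Real.zero_rpow (by linarith), sub_zero]

theorem rpow_le_rpow_add_setIntegral {r a w : ℝ} (hr : 0 < r) (hw : 0 ≤ w) :
    w ^ r ≤ a ^ r + r * ∫ t in Ioo a w, t ^ (r - 1) := by
  rcases le_or_gt w a with hwa | haw
  · rw [Ioo_eq_empty (not_lt.2 hwa), Measure.restrict_empty, integral_zero_measure, mul_zero,
      add_zero]
    exact Real.rpow_le_rpow hw hwa hr.le
  · rw [← integral_Ioc_eq_integral_Ioo, ← intervalIntegral.integral_of_le haw.le,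
      integral_rpow (Or.inl (by linarith)), sub_add_cancel, mul_div_cancel₀ _ hr.ne']
    linarith

theorem sum_mul_indicator_Iio_le {ι : Type*} (s : Finset ι) (w : ι → ℝ) {C β t : ℝ}
    (hβ : 0 < β) (ht : 0 < t)
    (hlevel : ∑ i ∈ s with t < w i, w i ≤ C * t * #{i ∈ s | β * t < w i}) (r : ℝ) :
    ∑ i ∈ s, w i * (Iio (w i)).indicator (· ^ (r - 1)) t ≤
      C * ∑ i ∈ s, (Iio (w i / β)).indicator (· ^ r) t := by
  have hlt : ∀ i, t < w i / β ↔ β * t < w i := fun i => by rw [lt_div_iff₀ hβ, mul_comm]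
  simp only [indicator_apply, Set.mem_Iio, mul_ite, mul_zero, ← Finset.sum_filter, hlt,
    Finset.sum_const, nsmul_eq_mul, ← Finset.sum_mul]
  calc (∑ i ∈ s with t < w i, w i) * t ^ (r - 1)
      ≤ C * t * #{i ∈ s | β * t < w i} * t ^ (r - 1) :=
        mul_le_mul_of_nonneg_right hlevel (Real.rpow_nonneg ht.le _)
    _ = C * (#{i ∈ s | β * t < w i} * t ^ r) := by
        rw [show r = 1 + (r - 1) by ring, Real.rpow_add ht, Real.rpow_one, add_sub_cancel_left]
        ring

theorem setIntegral_Ioi_sum_indicator_Iio_rpow_le {ι : Type*} (s : Finset ι) {w : ι → ℝ}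
    (hw : ∀ i ∈ s, 0 ≤ w i) {a β q : ℝ} (ha : 0 ≤ a) (hβ : 0 < β) (hq : 0 < q) :
    ∫ t in Ioi a, ∑ i ∈ s, (Iio (w i / β)).indicator (· ^ (q - 1)) t ≤
      β ^ (-q) / q * ∑ i ∈ s, w i ^ q := by
  rw [integral_finsetSum _ fun i _ =>
    integrableOn_Ioi_indicator_Iio (integrableOn_Ioo_rpow (by linarith) a _), Finset.mul_sum]
  refine Finset.sum_le_sum fun i hi => ?_
  calc ∫ t in Ioi a, (Iio (w i / β)).indicator (· ^ (q - 1)) t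
      = ∫ t in Ioo a (w i / β), t ^ (q - 1) := setIntegral_Ioi_indicator_Iio _ a _
    _ ≤ (w i / β) ^ (q - 1 + 1) / (q - 1 + 1) :=
        setIntegral_Ioo_rpow_le (by linarith) ha (div_nonneg (hw i hi) hβ.le)
    _ = β ^ (-q) / q * w i ^ q := by
        rw [sub_add_cancel, Real.div_rpow (hw i hi) hβ.le, Real.rpow_neg hβ.le]
        ring

theorem sum_rpow_le_of_sum_filter_le {ι : Type*} (s : Finset ι) {w : ι → ℝ}
    (hw : ∀ i ∈ s, 0 ≤ w i) {a C β q : ℝ} (ha : 0 ≤ a) (hC : 0 ≤ C) (hβ : 0 < β) (hq : 1 < q)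
    (hlevel : ∀ t, a < t → ∑ i ∈ s with t < w i, w i ≤ C * t * #{i ∈ s | β * t < w i}) :
    ∑ i ∈ s, w i ^ q ≤
      a ^ (q - 1) * ∑ i ∈ s, w i + (q - 1) / q * C * β ^ (-q) * ∑ i ∈ s, w i ^ q := by
  set r := q - 1
  have hr : 0 < r := by linarith
  have hpoint : ∀ i ∈ s, w i ^ q ≤ a ^ r * w i + r * (w i * ∫ t in Ioo a (w i), t ^ (r - 1)) := by
    intro i hi
    have := mul_le_mul_of_nonneg_left (rpow_le_rpow_add_setIntegral (a := a) hr (hw i hi))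
      (hw i hi)
    rw [← Real.rpow_one_add' (hw i hi) (by linarith), add_sub_cancel] at this
    linarith
  have hind : ∀ {p : ℝ}, -1 < p → ∀ b, IntegrableOn ((Set.Iio b).indicator (· ^ p)) (Ioi a) :=
    fun hp b => integrableOn_Ioi_indicator_Iio (integrableOn_Ioo_rpow hp a b)
  have hswap : ∑ i ∈ s, w i * ∫ t in Ioo a (w i), t ^ (r - 1) =
      ∫ t in Ioi a, ∑ i ∈ s, w i * (Iio (w i)).indicator (· ^ (r - 1)) t := by
    rw [integral_finsetSum _ fun i _ => (hind (by linarith) (w i)).const_mul (w i)]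
    simp only [integral_const_mul, setIntegral_Ioi_indicator_Iio]
  have hlayer : ∫ t in Ioi a, ∑ i ∈ s, w i * (Iio (w i)).indicator (· ^ (r - 1)) t ≤
      C * (β ^ (-q) / q * ∑ i ∈ s, w i ^ q) := by
    refine (setIntegral_mono_on
      (integrable_finsetSum s fun i _ => (hind (by linarith) (w i)).const_mul (w i))
      ((integrable_finsetSum s fun i _ => hind (by linarith) (w i / β)).const_mul C)
      measurableSet_Ioi fun t (ht : a < t) =>
        sum_mul_indicator_Iio_le s w hβ (ha.trans_lt ht) (hlevel t ht) r).trans ?_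
    rw [integral_const_mul]
    exact mul_le_mul_of_nonneg_left
      (setIntegral_Ioi_sum_indicator_Iio_rpow_le s hw ha hβ (by linarith)) hC
  have hsum := Finset.sum_le_sum hpoint
  rw [Finset.sum_add_distrib, ← Finset.mul_sum, ← Finset.mul_sum, hswap] at hsum
  calc ∑ i ∈ s, w i ^ q ≤ a ^ r * ∑ i ∈ s, w i + r * (C * (β ^ (-q) / q * ∑ i ∈ s, w i ^ q)) :=
        hsum.trans (by gcongr)
    _ = _ := by ring

end

theorem rpow_avg_le_two_mul_avg_of_sum_filter_le {ι : Type*} {s : Finset ι} (hs : s.Nonempty)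
    {w : ι → ℝ} (hw : ∀ i ∈ s, 0 ≤ w i) {C β q : ℝ} (hC : 0 ≤ C) (hβ : 0 < β) (hq : 1 < q)
    (hsmall : (q - 1) / q * C * β ^ (-q) ≤ 1 / 2)
    (hlevel : ∀ t, (#s : ℝ)⁻¹ * ∑ i ∈ s, w i < t →
      ∑ i ∈ s with t < w i, w i ≤ C * t * #{i ∈ s | β * t < w i}) :
    ((#s : ℝ)⁻¹ * ∑ i ∈ s, w i ^ q) ^ (1 / q) ≤ 2 * ((#s : ℝ)⁻¹ * ∑ i ∈ s, w i) := by
  set A := (#s : ℝ)⁻¹ * ∑ i ∈ s, w i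
  have hcard : (0 : ℝ) < #s := by exact_mod_cast hs.card_pos
  have hA : 0 ≤ A := mul_nonneg (inv_nonneg.2 hcard.le) (Finset.sum_nonneg hw)
  have hsumA : A ^ (q - 1) * ∑ i ∈ s, w i = #s * A ^ q := by
    rw [show ∑ i ∈ s, w i = #s * A by rw [mul_inv_cancel_left₀ hcard.ne'], mul_left_comm,
      ← Real.rpow_add_one' hA (by linarith), sub_add_cancel]
  have hbound := sum_rpow_le_of_sum_filter_le s hw hA hC hβ hq hlevel
  rw [hsumA] at hbound
  have hWq : 0 ≤ ∑ i ∈ s, w i ^ q := Finset.sum_nonneg fun i hi => Real.rpow_nonneg (hw i hi) q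
  have havg : (#s : ℝ)⁻¹ * ∑ i ∈ s, w i ^ q ≤ 2 * A ^ q := by
    rw [inv_mul_le_iff₀ hcard]
    nlinarith
  have hq0 : 0 < q := by linarith
  calc ((#s : ℝ)⁻¹ * ∑ i ∈ s, w i ^ q) ^ (1 / q) ≤ (2 * A ^ q) ^ (1 / q) := by gcongr
    _ = 2 ^ (1 / q) * A := by
        rw [Real.mul_rpow zero_le_two (Real.rpow_nonneg hA q), one_div,
          Real.rpow_rpow_inv hA hq0.ne']
    _ ≤ 2 * A := by
        gcongr
        exact Real.rpow_le_self_of_one_le one_le_two ((div_le_one hq0).2 hq.le)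

theorem exists_one_lt_sub_one_div_mul_rpow_neg_le (C : ℝ) {β : ℝ} (hβ : 0 < β) :
    ∃ q : ℝ, 1 < q ∧ (q - 1) / q * C * β ^ (-q) ≤ 1 / 2 := by
  have hcont : ContinuousAt (fun q : ℝ => (q - 1) / q * C * β ^ (-q)) 1 := by
    refine (((continuousAt_id.sub continuousAt_const).div continuousAt_id one_ne_zero).mul
      continuousAt_const).mul ?_
    exact (Real.continuousAt_const_rpow hβ.ne').comp continuousAt_neg
  have hlim : ∀ᶠ q in nhds 1, (q - 1) / q * C * β ^ (-q) < 1 / 2 :=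
    hcont.eventually_lt continuousAt_const (by norm_num)
  obtain ⟨q, hq, hlt⟩ := (eventually_mem_nhdsWithin.and (hlim.filter_mono nhdsWithin_le_nhds) :
    ∀ᶠ q in nhdsWithin (1 : ℝ) (Set.Ioi 1), q ∈ Set.Ioi 1 ∧ _).exists
  exact ⟨q, hq, hlt.le⟩

theorem stmt3_general {X : Type*} [MeasurableSpace X] (μ : Measure X)
    (T : X → X)
    (ω : X → ℝ) (hωpos : ∀ x, 0 < ω x)
    (h : MemAlam μ T ω) :
    ∃ C q : ℝ, 1 < C ∧ 1 < q ∧ MemRH μ T ω C q := by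
  obtain ⟨C, β, hC, hβ, hlevel⟩ := h
  obtain ⟨q, hq, hsmall⟩ := exists_one_lt_sub_one_div_mul_rpow_neg_le C hβ
  refine ⟨2, q, one_lt_two, hq, ?_⟩
  filter_upwards [hlevel] with x hx k hk
  have := rpow_avg_le_two_mul_avg_of_sum_filter_le (nonempty_range_iff.2 hk.ne')
    (fun i _ => (hωpos (T^[i] x)).le) hC.le hβ hq hsmall
  rw [card_range] at this
  exact this (hx k hk)

theorem stmt3 {X : Type*} [MeasurableSpace X] (μ : Measure X)
    [IsProbabilityMeasure μ] [NullSingletonClass μ] (hcomp : μ.IsComplete)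
    (T : X → X) (hTbij : Function.Bijective T) (hTerg : Ergodic T μ)
    (ω : X → ℝ) (hω : Measurable ω) (hωpos : ∀ x, 0 < ω x)
    (h : MemAlam μ T ω) :
    ∃ C q : ℝ, 1 < C ∧ 1 < q ∧ MemRH μ T ω C q :=
  stmt3_general μ T ω hωpos h
end

section
/- Let ω be a weight. If there exist C, q > 1 such that ω ∈ RH_q, then ω ∈ A^CF_∞. -/
/-!
Hölder's inequality with exponents `q` and `q' = q / (q - 1)` bounds the mass of a subset `A` of
an orbit segment `s` by `#A ^ (1 - 1/q)` times the `ℓ^q` norm of the weight on `A`, hence on `s`, and the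
reverse Hölder inequality bounds that norm by `C #s ^ (1/q - 1)` times the total mass on `s`.
Together they give `A^CF_∞` with the same constant `C` and exponent `ε = 1 - 1/q`.
-/

open MeasureTheory Finset

/-- `ω ∈ A^CF_∞`. -/
def MemACF {X : Type*} [MeasurableSpace X] (μ : Measure X) (T : X → X) (ω : X → ℝ) : Prop :=
  ∃ C ε : ℝ, 1 < C ∧ 0 < ε ∧ ε < 1 ∧
    ∀ᵐ x ∂μ, ∀ k : ℕ, 0 < k → ∀ A ⊆ Finset.range k,
      (∑ i ∈ A, ω (T^[i] x)) / (∑ i ∈ Finset.range k, ω (T^[i] x)) ≤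
        C * ((A.card : ℝ) / k) ^ ε

open Real

section ReverseHolder

variable {ι : Type*} {f : ι → ℝ} {q : ℝ}

theorem sum_le_card_rpow_mul_sum_rpow (s : Finset ι) (hq : 1 < q) (hf : ∀ i ∈ s, 0 ≤ f i) :
    ∑ i ∈ s, f i ≤ (#s : ℝ) ^ (1 - 1 / q) * (∑ i ∈ s, f i ^ q) ^ (1 / q) := by
  have hpq : (1 - q⁻¹)⁻¹.HolderConjugate q := by
    simpa using HolderConjugate.one_sub_inv_inv (inv_pos.2 (by linarith)) (inv_lt_one_of_one_lt₀ hq)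
  simpa [one_rpow, rpow_natCast] using
    inner_le_Lp_mul_Lq_of_nonneg s hpq (fun _ _ => zero_le_one) hf

theorem card_rpow_mul_rpow_sum_rpow_le_of_reverseHolder {s : Finset ι} (hs : s.Nonempty) {C : ℝ}
    (hf : ∀ i ∈ s, 0 ≤ f i)
    (hRH : ((#s : ℝ)⁻¹ * ∑ i ∈ s, f i ^ q) ^ (1 / q) ≤ C * ((#s : ℝ)⁻¹ * ∑ i ∈ s, f i)) :
    (#s : ℝ) ^ (1 - 1 / q) * (∑ i ∈ s, f i ^ q) ^ (1 / q) ≤ C * ∑ i ∈ s, f i := by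
  have hcard : (0 : ℝ) < #s := by exact_mod_cast hs.card_pos
  have hsum : 0 ≤ ∑ i ∈ s, f i ^ q := sum_nonneg fun i hi => rpow_nonneg (hf i hi) q
  calc (#s : ℝ) ^ (1 - 1 / q) * (∑ i ∈ s, f i ^ q) ^ (1 / q)
      = #s * ((#s : ℝ)⁻¹ * ∑ i ∈ s, f i ^ q) ^ (1 / q) := by
        rw [mul_rpow (inv_nonneg.2 hcard.le) hsum, inv_rpow hcard.le, rpow_sub hcard, rpow_one]
        field_simp
    _ ≤ #s * (C * ((#s : ℝ)⁻¹ * ∑ i ∈ s, f i)) := mul_le_mul_of_nonneg_left hRH hcard.le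
    _ = C * ∑ i ∈ s, f i := by field_simp

theorem sum_le_mul_card_div_rpow_mul_sum_of_reverseHolder {s A : Finset ι} (hs : s.Nonempty)
    {C : ℝ} (hq : 1 < q) (hf : ∀ i ∈ s, 0 ≤ f i)
    (hRH : ((#s : ℝ)⁻¹ * ∑ i ∈ s, f i ^ q) ^ (1 / q) ≤ C * ((#s : ℝ)⁻¹ * ∑ i ∈ s, f i))
    (hA : A ⊆ s) :
    ∑ i ∈ A, f i ≤ C * ((#A : ℝ) / #s) ^ (1 - 1 / q) * ∑ i ∈ s, f i := by
  have hcard : (0 : ℝ) < #s ^ (1 - 1 / q) := rpow_pos_of_pos (by exact_mod_cast hs.card_pos) _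
  have hnormA : (∑ i ∈ A, f i ^ q) ^ (1 / q) ≤ (∑ i ∈ s, f i ^ q) ^ (1 / q) :=
    rpow_le_rpow (sum_nonneg fun i hi => rpow_nonneg (hf i (hA hi)) q)
      (sum_le_sum_of_subset_of_nonneg hA fun i hi _ => rpow_nonneg (hf i hi) q) (by positivity)
  have hnorm : (∑ i ∈ s, f i ^ q) ^ (1 / q) ≤ C * (∑ i ∈ s, f i) / #s ^ (1 - 1 / q) := by
    rw [le_div_iff₀ hcard, mul_comm]
    exact card_rpow_mul_rpow_sum_rpow_le_of_reverseHolder hs hf hRH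
  calc ∑ i ∈ A, f i ≤ (#A : ℝ) ^ (1 - 1 / q) * (∑ i ∈ A, f i ^ q) ^ (1 / q) :=
        sum_le_card_rpow_mul_sum_rpow A hq fun i hi => hf i (hA hi)
    _ ≤ (#A : ℝ) ^ (1 - 1 / q) * (C * (∑ i ∈ s, f i) / #s ^ (1 - 1 / q)) := by
        gcongr
        exact hnormA.trans hnorm
    _ = C * ((#A : ℝ) / #s) ^ (1 - 1 / q) * ∑ i ∈ s, f i := by
        rw [div_rpow (Nat.cast_nonneg _) (Nat.cast_nonneg _)]
        ring

end ReverseHolder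

theorem stmt4_general {X : Type*} [MeasurableSpace X] (μ : Measure X)
    (T : X → X)
    (ω : X → ℝ) (hωpos : ∀ x, 0 < ω x)
    (h : ∃ C q : ℝ, 1 < C ∧ 1 < q ∧ MemRH μ T ω C q) :
    MemACF μ T ω := by
  obtain ⟨C, q, hC, hq, hRH⟩ := h
  refine ⟨C, 1 - 1 / q, hC, sub_pos.2 ((div_lt_one (by linarith)).2 hq),
    sub_lt_self _ (by positivity), ?_⟩
  filter_upwards [hRH] with x hx k hk A hA
  have hrange : (range k).Nonempty := nonempty_range_iff.2 hk.ne'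
  rw [div_le_iff₀ (sum_pos (fun i _ => hωpos _) hrange)]
  simpa using sum_le_mul_card_div_rpow_mul_sum_of_reverseHolder hrange hq
    (fun i _ => (hωpos _).le) (by simpa using hx k hk) hA

theorem stmt4 {X : Type*} [MeasurableSpace X] (μ : Measure X)
    [IsProbabilityMeasure μ] [NullSingletonClass μ] (hcomp : μ.IsComplete)
    (T : X → X) (hTbij : Function.Bijective T) (hTerg : Ergodic T μ)
    (ω : X → ℝ) (hω : Measurable ω) (hωpos : ∀ x, 0 < ω x)
    (h : ∃ C q : ℝ, 1 < C ∧ 1 < q ∧ MemRH μ T ω C q) :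
    MemACF μ T ω :=
  stmt4_general μ T ω hωpos h
end

section
/- Let ω be a weight. If ω ∈ Â^M_∞, then ω ∈ A^M_∞. -/
open MeasureTheory Finset

/-- `ω ∈ Â^M_∞`. -/
def MemAhatM {X : Type*} [MeasurableSpace X] (μ : Measure X) (T : X → X) (ω : X → ℝ) : Prop :=
  ∃ α' β' : ℝ, 0 < α' ∧ α' < 1 ∧ 0 < β' ∧ β' < 1 ∧
    ∀ᵐ x ∂μ, ∀ k : ℕ, 0 < k → ∀ A ⊆ Finset.range k,
      (∑ i ∈ A, ω (T^[i] x)) ≤ α' * ∑ i ∈ Finset.range k, ω (T^[i] x) →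
        (A.card : ℝ) ≤ β' * k

/-- `ω ∈ A^M_∞`. -/
def MemAM {X : Type*} [MeasurableSpace X] (μ : Measure X) (T : X → X) (ω : X → ℝ) : Prop :=
  ∃ α β : ℝ, 0 < α ∧ α < 1 ∧ 0 < β ∧ β < 1 ∧
    ∀ᵐ x ∂μ, ∀ k : ℕ, 0 < k → ∀ A ⊆ Finset.range k,
      (A.card : ℝ) ≤ α * k →
        (∑ i ∈ A, ω (T^[i] x)) ≤ β * ∑ i ∈ Finset.range k, ω (T^[i] x)

/-! Apply the `Â^M_∞` condition to the complement of a small index set `A`: the complement has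
more than a `β'`-fraction of the indices, so it carries more than an `α'`-fraction of the total
weight, and `A` therefore carries at most a `(1 - α')`-fraction. -/

theorem sum_le_one_sub_mul_sum_of_card_lt {ι : Type*} [DecidableEq ι] {s A : Finset ι}
    {w : ι → ℝ} {α' β' : ℝ}
    (hhat : ∀ B ⊆ s, ∑ i ∈ B, w i ≤ α' * ∑ i ∈ s, w i → (#B : ℝ) ≤ β' * #s)
    (hA : A ⊆ s) (hcard : (#A : ℝ) < (1 - β') * #s) :
    ∑ i ∈ A, w i ≤ (1 - α') * ∑ i ∈ s, w i := by
  have hcard_sdiff : (#(s \ A) : ℝ) = #s - #A := by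
    rw [card_sdiff_of_subset hA, Nat.cast_sub (card_le_card hA)]
  have hsum_sdiff : α' * ∑ i ∈ s, w i < ∑ i ∈ s \ A, w i := by
    by_contra! hle
    linarith [hhat (s \ A) sdiff_subset hle]
  linarith [sum_sdiff hA (f := w)]

theorem stmt6_general {X : Type*} [MeasurableSpace X] (μ : Measure X)
    (T : X → X)
    (ω : X → ℝ)
    (h : MemAhatM μ T ω) :
    MemAM μ T ω := by
  obtain ⟨α', β', hα'0, hα'1, hβ'0, hβ'1, hae⟩ := h
  -- any `α < 1 - β'` works; the strict gap is what makes the complement exceed `β' k`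
  refine ⟨(1 - β') / 2, 1 - α', by linarith, by linarith, by linarith, by linarith, ?_⟩
  filter_upwards [hae] with x hx k hk A hA hcard
  have hk' : (0 : ℝ) < k := by exact_mod_cast hk
  refine sum_le_one_sub_mul_sum_of_card_lt (by simpa using hx k hk) hA ?_
  rw [card_range]
  nlinarith

theorem stmt6 {X : Type*} [MeasurableSpace X] (μ : Measure X)
    [IsProbabilityMeasure μ] [NullSingletonClass μ] (hcomp : μ.IsComplete)
    (T : X → X) (hTbij : Function.Bijective T) (hTerg : Ergodic T μ)
    (ω : X → ℝ) (hω : Measurable ω) (hωpos : ∀ x, 0 < ω x)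
    (h : MemAhatM μ T ω) :
    MemAM μ T ω :=
  stmt6_general μ T ω h
end

section
/- Let ω be a weight. If ω ∈ A^M_∞, then ω ∈ A^avg_∞. -/
open MeasureTheory Finset

/-!
Fix a point and a length `k`, and call `j < k` *light* if `ω(Tʲx)` is at most `γ` times the
average. The light terms together carry at most `γ` of the total mass, so the heavy ones carry
more than `1 - γ > β` of it; by `A^M_∞` the heavy indices are then more than `α k` in number,
and the light ones fewer than `(1 - α) k`. Any
`0 < γ < 1 - β` works.
-/

section LightIndices

variable {ι : Type*} (s : Finset ι) (f : ι → ℝ)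

theorem sum_filter_le_mul_avg_sum {γ : ℝ} (hγ : 0 ≤ γ) (hsum : 0 ≤ ∑ i ∈ s, f i) :
    ∑ i ∈ s with f i ≤ γ * ((#s : ℝ)⁻¹ * ∑ i ∈ s, f i), f i ≤ γ * ∑ i ∈ s, f i := by
  set c := γ * ((#s : ℝ)⁻¹ * ∑ i ∈ s, f i)
  have hc : 0 ≤ c := by positivity
  calc ∑ i ∈ s with f i ≤ c, f i
      ≤ #(s.filter fun i ↦ f i ≤ c) • c := sum_le_card_nsmul _ _ _ fun i hi ↦ (mem_filter.1 hi).2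
    _ ≤ #s • c := by gcongr; exact filter_subset _ _
    _ = γ * ∑ i ∈ s, f i := by
      rcases s.eq_empty_or_nonempty with rfl | hs
      · simp
      · have hs' : (#s : ℝ) ≠ 0 := by exact_mod_cast hs.card_pos.ne'
        simp only [c, nsmul_eq_mul]
        field_simp

theorem card_filter_le_mul_avg_le {α β γ : ℝ} (hγ : 0 ≤ γ) (hγβ : γ + β < 1)
    (hpos : 0 < ∑ i ∈ s, f i)
    (hAM : ∀ A ⊆ s, (#A : ℝ) ≤ α * #s → ∑ i ∈ A, f i ≤ β * ∑ i ∈ s, f i) :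
    (#(s.filter fun i ↦ f i ≤ γ * ((#s : ℝ)⁻¹ * ∑ i ∈ s, f i)) : ℝ) ≤ (1 - α) * #s := by
  set p : ι → Prop := fun i ↦ f i ≤ γ * ((#s : ℝ)⁻¹ * ∑ i ∈ s, f i)
  have hlight := sum_filter_le_mul_avg_sum s f hγ hpos.le
  have hsplit := sum_filter_add_sum_filter_not s p f
  have hgap : 0 < (1 - γ - β) * ∑ i ∈ s, f i := mul_pos (by linarith) hpos
  have hheavy_sum : β * ∑ i ∈ s, f i < ∑ i ∈ s with ¬p i, f i := by linarith
  have hheavy_card : α * #s < (#(s.filter fun i ↦ ¬p i) : ℝ) :=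
    lt_of_not_ge fun h ↦ (hAM _ (filter_subset _ _) h).not_gt hheavy_sum
  have hcard : (#(s.filter p) : ℝ) + #(s.filter fun i ↦ ¬p i) = #s := by
    exact_mod_cast card_filter_add_card_filter_not p
  linarith

end LightIndices

theorem stmt7_general {X : Type*} [MeasurableSpace X] (μ : Measure X)
    (T : X → X)
    (ω : X → ℝ) (hωpos : ∀ x, 0 < ω x)
    (h : MemAM μ T ω) :
    MemAavg μ T ω := by
  obtain ⟨α, β, hα0, hα1, hβ0, hβ1, hae⟩ := h
  refine ⟨(1 - β) / 2, 1 - α, by linarith, by linarith, by linarith, by linarith, ?_⟩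
  filter_upwards [hae] with x hx k hk
  have hk' : (0 : ℝ) < k := Nat.cast_pos.2 hk
  have hpos : 0 < ∑ i ∈ range k, ω (T^[i] x) :=
    sum_pos (fun i _ ↦ hωpos _) (nonempty_range_iff.2 hk.ne')
  have key := card_filter_le_mul_avg_le (range k) (fun i ↦ ω (T^[i] x))
    (α := α) (β := β) (γ := (1 - β) / 2) (by linarith) (by linarith) hpos (by simpa only [card_range] using hx k hk)
  simp only [card_range] at key
  rw [div_le_iff₀ hk']
  exact key

theorem stmt7 {X : Type*} [MeasurableSpace X] (μ : Measure X)
    [IsProbabilityMeasure μ] [NullSingletonClass μ] (hcomp : μ.IsComplete)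
    (T : X → X) (hTbij : Function.Bijective T) (hTerg : Ergodic T μ)
    (ω : X → ℝ) (hω : Measurable ω) (hωpos : ∀ x, 0 < ω x)
    (h : MemAM μ T ω) :
    MemAavg μ T ω :=
  stmt7_general μ T ω hωpos h
end

section
/- Let ω be a weight. If there exist C, q > 1 such that ω ∈ RH_q, then ω ∈ A^log_∞. -/
open MeasureTheory Finset

/-- `ω ∈ A^log_∞`. -/
def MemAlog {X : Type*} [MeasurableSpace X] (μ : Measure X) (T : X → X) (ω : X → ℝ) : Prop :=
  ∃ C : ℝ, 1 < C ∧
    ∀ᵐ x ∂μ, ∀ k : ℕ, 0 < k →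
      (k : ℝ)⁻¹ * ∑ j ∈ Finset.range k,
        (ω (T^[j] x) / ergAvg T ω k x) * max (Real.log (ω (T^[j] x) / ergAvg T ω k x)) 0 ≤ C

/-!
The elementary bound `t log⁺ t ≤ t^q / (q - 1)` for `t ≥ 0`, applied to `t = ω(Tʲx) / T_{0,k-1}ω(x)`
and averaged over `j < k`, bounds the `A^log_∞` average by the `q`-th power average of `ω` divided by
`(T_{0,k-1}ω(x))^q`, and `RH_q` bounds this quotient by `C^q`. So `C^q / (q - 1) + 1` is an `A^log_∞` constant.
-/

lemma Real.mul_max_log_le_rpow_div {q t : ℝ} (hq : 1 < q) (ht : 0 ≤ t) :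
    t * max (Real.log t) 0 ≤ t ^ q / (q - 1) := by
  have hq₁ : 0 < q - 1 := by linarith
  rcases max_cases (Real.log t) 0 with ⟨hmax, -⟩ | ⟨hmax, -⟩
  · calc t * max (Real.log t) 0 = t * Real.log t := by rw [hmax]
      _ ≤ t * (t ^ (q - 1) / (q - 1)) := by gcongr; exact Real.log_le_rpow_div ht hq₁
      _ = t ^ q / (q - 1) := by
        rw [← mul_div_assoc, ← Real.rpow_one_add' ht (by linarith), add_sub_cancel]
  · rw [hmax, mul_zero]
    positivity

lemma avg_mul_max_log_le_of_rpow_avg_le {ι : Type*} (s : Finset ι) (a : ι → ℝ)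
    (ha : ∀ i ∈ s, 0 ≤ a i) {A C q : ℝ} (hA : 0 < A) (hC : 0 ≤ C) (hq : 1 < q)
    (hRH : ((#s : ℝ)⁻¹ * ∑ i ∈ s, a i ^ q) ^ (1 / q) ≤ C * A) :
    (#s : ℝ)⁻¹ * ∑ i ∈ s, (a i / A) * max (Real.log (a i / A)) 0 ≤ C ^ q / (q - 1) := by
  have hpow_avg : (#s : ℝ)⁻¹ * ∑ i ∈ s, a i ^ q ≤ (C * A) ^ q := by
    rw [one_div, Real.rpow_inv_le_iff_of_pos _ (by positivity) (by linarith)] at hRH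
    · exact hRH
    · exact mul_nonneg (by positivity) (sum_nonneg fun i hi => Real.rpow_nonneg (ha i hi) q)
  have hterm : ∀ i ∈ s, (a i / A) * max (Real.log (a i / A)) 0 ≤ a i ^ q / A ^ q / (q - 1) :=
    fun i hi => by
      rw [← Real.div_rpow (ha i hi) hA.le]
      exact Real.mul_max_log_le_rpow_div hq (div_nonneg (ha i hi) hA.le)
  have hq₁ : 0 < q - 1 := by linarith
  have hAq : 0 < A ^ q := Real.rpow_pos_of_pos hA q
  calc (#s : ℝ)⁻¹ * ∑ i ∈ s, (a i / A) * max (Real.log (a i / A)) 0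
      ≤ (#s : ℝ)⁻¹ * ∑ i ∈ s, a i ^ q / A ^ q / (q - 1) := by gcongr with i hi; exact hterm i hi
    _ = ((#s : ℝ)⁻¹ * ∑ i ∈ s, a i ^ q) / A ^ q / (q - 1) := by
      rw [← sum_div, ← sum_div, mul_div_assoc, mul_div_assoc]
    _ ≤ (C * A) ^ q / A ^ q / (q - 1) := by gcongr
    _ = C ^ q / (q - 1) := by rw [Real.mul_rpow hC hA.le, mul_div_cancel_right₀ _ hAq.ne']

lemma ergAvg_pos {X : Type*} (T : X → X) {ω : X → ℝ} (hω : ∀ x, 0 < ω x) {k : ℕ} (hk : 0 < k)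
    (x : X) : 0 < ergAvg T ω k x :=
  mul_pos (by positivity) (sum_pos (fun i _ => hω _) ⟨0, mem_range.mpr hk⟩)

theorem stmt8_general {X : Type*} [MeasurableSpace X] (μ : Measure X)
    (T : X → X)
    (ω : X → ℝ) (hωpos : ∀ x, 0 < ω x)
    (h : ∃ C q : ℝ, 1 < C ∧ 1 < q ∧ MemRH μ T ω C q) :
    MemAlog μ T ω := by
  obtain ⟨C, q, hC, hq, hRH⟩ := h
  have hq₁ : 0 < q - 1 := by linarith
  have hCq : 0 < C ^ q / (q - 1) := by positivity
  refine ⟨C ^ q / (q - 1) + 1, by linarith, ?_⟩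
  filter_upwards [hRH] with x hx k hk
  have hlog := avg_mul_max_log_le_of_rpow_avg_le (range k) (fun i => ω (T^[i] x))
    (fun i _ => (hωpos _).le) (ergAvg_pos T hωpos hk x) (zero_le_one.trans hC.le) hq
    (by simpa only [card_range, ergAvg] using hx k hk)
  rw [card_range] at hlog
  linarith

theorem stmt8 {X : Type*} [MeasurableSpace X] (μ : Measure X)
    [IsProbabilityMeasure μ] [NullSingletonClass μ] (hcomp : μ.IsComplete)
    (T : X → X) (hTbij : Function.Bijective T) (hTerg : Ergodic T μ)
    (ω : X → ℝ) (hω : Measurable ω) (hωpos : ∀ x, 0 < ω x)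
    (h : ∃ C q : ℝ, 1 < C ∧ 1 < q ∧ MemRH μ T ω C q) :
    MemAlog μ T ω :=
  stmt8_general μ T ω hωpos h
end

section
/- Let ω be a weight. If ω ∈ A^log_∞, then ω ∈ A^M_∞. -/
/-!
The argument is pointwise in `x` and `k`. Let `a` be the average of `ω (Tⁱ x)` over `i < k` and
`t = ω (Tⁱ x) / a`. If `t > e^{2C}` then `log t > 2C`, so `t ≤ e^{2C} + t log⁺ t / (2C)` for all
`t ≥ 0`. Summing this over a set `A` of at most `k / (4 e^{2C})` indices and using the `L log L`
bound shows that `A` carries mass at most `k a / 4 + k a / 2 = (3/4) ∑_{i<k} ω (Tⁱ x)`.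
-/

open MeasureTheory Finset

namespace Real

lemma le_exp_add_mul_posLog_div {t L : ℝ} (ht : 0 ≤ t) (hL : 0 < L) :
    t ≤ exp L + t * max (log t) 0 / L := by
  rcases le_or_gt t (exp L) with _ | hlt
  · have : 0 ≤ t * max (log t) 0 / L := by positivity
    linarith
  · have hlog : L < log t := (lt_log_iff_exp_lt ((exp_pos L).trans hlt)).mpr hlt
    have : t ≤ t * max (log t) 0 / L := by
      rw [le_div_iff₀ hL, max_eq_left (by linarith)]
      exact mul_le_mul_of_nonneg_left hlog.le ht
    linarith [exp_pos L]

end Real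

section LLogLBound

variable {ι : Type*} {s A : Finset ι} {w : ι → ℝ}

lemma sum_le_card_mul_add_llog (hA : A ⊆ s) (hw : ∀ i ∈ s, 0 ≤ w i) {a L : ℝ}
    (ha : 0 < a) (hL : 0 < L) :
    ∑ i ∈ A, w i ≤ #A * (Real.exp L * a) +
      a / L * ∑ i ∈ s, w i / a * max (Real.log (w i / a)) 0 := by
  set f : ι → ℝ := fun i => w i / a * max (Real.log (w i / a)) 0
  have hf : ∀ i ∈ s, 0 ≤ f i := fun i hi =>
    mul_nonneg (div_nonneg (hw i hi) ha.le) (le_max_right _ _)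
  have hpoint : ∀ i ∈ A, w i ≤ Real.exp L * a + a / L * f i := by
    intro i hi
    have key := Real.le_exp_add_mul_posLog_div (div_nonneg (hw i (hA hi)) ha.le) hL
    calc w i = a * (w i / a) := by field_simp
      _ ≤ a * (Real.exp L + f i / L) := mul_le_mul_of_nonneg_left key ha.le
      _ = Real.exp L * a + a / L * f i := by ring
  calc ∑ i ∈ A, w i ≤ ∑ i ∈ A, (Real.exp L * a + a / L * f i) := sum_le_sum hpoint
    _ = #A * (Real.exp L * a) + a / L * ∑ i ∈ A, f i := by
      rw [sum_add_distrib, sum_const, nsmul_eq_mul, mul_sum]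
    _ ≤ #A * (Real.exp L * a) + a / L * ∑ i ∈ s, f i := by
      gcongr
      exact fun i hi _ => hf i hi

lemma sum_le_three_quarters_of_llog_le (hs : s.Nonempty) (hw : ∀ i ∈ s, 0 < w i)
    {C : ℝ} (hC : 0 < C)
    (hllog : (#s : ℝ)⁻¹ * ∑ i ∈ s, w i / ((#s : ℝ)⁻¹ * ∑ j ∈ s, w j) *
      max (Real.log (w i / ((#s : ℝ)⁻¹ * ∑ j ∈ s, w j))) 0 ≤ C)
    (hA : A ⊆ s) (hcard : (#A : ℝ) ≤ (4 * Real.exp (2 * C))⁻¹ * #s) :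
    ∑ i ∈ A, w i ≤ 3 / 4 * ∑ i ∈ s, w i := by
  set n : ℝ := (#s : ℝ)
  set a := n⁻¹ * ∑ j ∈ s, w j
  have hn : 0 < n := by simp [n, hs.card_pos]
  have hna : n * a = ∑ j ∈ s, w j := by simp only [a]; field_simp
  have ha : 0 < a := mul_pos (inv_pos.mpr hn) (sum_pos hw hs)
  have hmass : #A * (Real.exp (2 * C) * a) ≤ n * a / 4 := by
    calc #A * (Real.exp (2 * C) * a)
        ≤ (4 * Real.exp (2 * C))⁻¹ * n * (Real.exp (2 * C) * a) := by gcongr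
      _ = n * a / 4 := by field_simp
  have htail : a / (2 * C) * ∑ i ∈ s, w i / a * max (Real.log (w i / a)) 0 ≤ n * a / 2 := by
    calc a / (2 * C) * ∑ i ∈ s, w i / a * max (Real.log (w i / a)) 0
        ≤ a / (2 * C) * (n * C) := by
          gcongr
          rwa [inv_mul_le_iff₀ hn] at hllog
      _ = n * a / 2 := by field_simp
  calc ∑ i ∈ A, w i ≤ #A * (Real.exp (2 * C) * a) +
        a / (2 * C) * ∑ i ∈ s, w i / a * max (Real.log (w i / a)) 0 :=
        sum_le_card_mul_add_llog hA (fun i hi => (hw i hi).le) ha (by positivity)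
    _ ≤ 3 / 4 * (n * a) := by linarith
    _ = 3 / 4 * ∑ i ∈ s, w i := by rw [hna]

end LLogLBound

theorem stmt9_general {X : Type*} [MeasurableSpace X] (μ : Measure X)
    (T : X → X)
    (ω : X → ℝ) (hωpos : ∀ x, 0 < ω x)
    (h : MemAlog μ T ω) :
    MemAM μ T ω := by
  obtain ⟨C, hC, hae⟩ := h
  have hα : (4 * Real.exp (2 * C))⁻¹ < 1 :=
    inv_lt_one_of_one_lt₀ (by linarith [Real.add_one_le_exp (2 * C)])
  refine ⟨(4 * Real.exp (2 * C))⁻¹, 3 / 4, by positivity, hα, by norm_num, by norm_num, ?_⟩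
  filter_upwards [hae] with x hx k hk A hA hcard
  exact sum_le_three_quarters_of_llog_le (nonempty_range_iff.mpr hk.ne')
    (fun i _ => hωpos _) (zero_lt_one.trans hC) (by simpa [ergAvg] using hx k hk) hA
    (by simpa using hcard)

theorem stmt9 {X : Type*} [MeasurableSpace X] (μ : Measure X)
    [IsProbabilityMeasure μ] [NullSingletonClass μ] (hcomp : μ.IsComplete)
    (T : X → X) (hTbij : Function.Bijective T) (hTerg : Ergodic T μ)
    (ω : X → ℝ) (hω : Measurable ω) (hωpos : ∀ x, 0 < ω x)
    (h : MemAlog μ T ω) :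
    MemAM μ T ω :=
  stmt9_general μ T ω hωpos h
end

section
/- Let g and ω be weights. If there exist constants C, q > 1 such that ω ∈ RH_q(g), then ω ∈ A^CF_∞(g). -/
open MeasureTheory Finset

/-- The weighted ergodic average `T^g_{0,k-1}ω(x)`. -/
noncomputable def ergAvgW {X : Type*} (T : X → X) (g ω : X → ℝ) (k : ℕ) (x : X) : ℝ :=
  (∑ i ∈ Finset.range k, g (T^[i] x))⁻¹ *
    ∑ i ∈ Finset.range k, ω (T^[i] x) * g (T^[i] x)

/-- `ω ∈ RH_q(g)` with constant `C`. -/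
def MemRHW {X : Type*} [MeasurableSpace X] (μ : Measure X) (T : X → X) (g ω : X → ℝ)
    (C q : ℝ) : Prop :=
  ∀ᵐ x ∂μ, ∀ k : ℕ, 0 < k →
    ((∑ i ∈ Finset.range k, g (T^[i] x))⁻¹ *
        ∑ i ∈ Finset.range k, ω (T^[i] x) ^ q * g (T^[i] x)) ^ (1 / q) ≤
      C * ergAvgW T g ω k x

/-- `ω ∈ A^CF_∞(g)`. -/
def MemACFW {X : Type*} [MeasurableSpace X] (μ : Measure X) (T : X → X) (g ω : X → ℝ) : Prop :=
  ∃ C ε : ℝ, 1 < C ∧ 0 < ε ∧ ε < 1 ∧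
    ∀ᵐ x ∂μ, ∀ k : ℕ, 0 < k → ∀ A ⊆ Finset.range k,
      (∑ i ∈ A, ω (T^[i] x) * g (T^[i] x)) /
          (∑ i ∈ Finset.range k, ω (T^[i] x) * g (T^[i] x)) ≤
        C * ((∑ i ∈ A, g (T^[i] x)) / (∑ i ∈ Finset.range k, g (T^[i] x))) ^ ε

/-!
Everything happens along a single orbit segment, i.e. for finite sums. By Hölder's inequality
with weights `g`, the `ω g`-mass of `A` is at most `|A|_g ^ (1 - 1/q)` times the `L^q(g)`-norm of
`ω` on `A`; enlarging `A` to the whole segment and applying the reverse Hölder inequality bounds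
that norm by `C` times the `g`-average of `ω`, which gives `A^CF_∞` with `ε = 1 - 1/q`.
-/

theorem Finset.sum_mul_div_sum_le_of_reverse_holder {ι : Type*} {s A : Finset ι} (hA : A ⊆ s)
    {w v : ι → ℝ} (hw : ∀ i, 0 ≤ w i) (hv : ∀ i, 0 ≤ v i)
    (hG : 0 < ∑ i ∈ s, w i) (hS : 0 < ∑ i ∈ s, v i * w i) {C q : ℝ} (hq : 1 ≤ q)
    (hRH : ((∑ i ∈ s, w i)⁻¹ * ∑ i ∈ s, v i ^ q * w i) ^ (1 / q) ≤
      C * ((∑ i ∈ s, w i)⁻¹ * ∑ i ∈ s, v i * w i)) :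
    (∑ i ∈ A, v i * w i) / (∑ i ∈ s, v i * w i) ≤
      C * ((∑ i ∈ A, w i) / (∑ i ∈ s, w i)) ^ (1 - q⁻¹) := by
  set G := ∑ i ∈ s, w i
  set S := ∑ i ∈ s, v i * w i
  set Q := ∑ i ∈ s, v i ^ q * w i
  set GA := ∑ i ∈ A, w i
  set QA := ∑ i ∈ A, v i ^ q * w i
  have hvqw : ∀ i, 0 ≤ v i ^ q * w i := fun i => mul_nonneg (Real.rpow_nonneg (hv i) _) (hw i)
  have hq₀ : 0 ≤ q⁻¹ := inv_nonneg.2 (zero_le_one.trans hq)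
  have hGA : 0 ≤ GA := sum_nonneg fun i _ => hw i
  have hQ₀ : 0 ≤ Q := sum_nonneg fun i _ => hvqw i
  have holder : ∑ i ∈ A, v i * w i ≤ GA ^ (1 - q⁻¹) * QA ^ q⁻¹ := by
    simpa only [mul_comm (w _)] using Real.inner_le_weight_mul_Lp_of_nonneg A hq w v hw hv
  have hQA : QA ^ q⁻¹ ≤ Q ^ q⁻¹ :=
    Real.rpow_le_rpow (sum_nonneg fun i _ => hvqw i)
      (sum_le_sum_of_subset_of_nonneg hA fun i _ _ => hvqw i) hq₀
  have hQ : Q ^ q⁻¹ ≤ C * S * G ^ (q⁻¹ - 1) := by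
    rw [one_div] at hRH
    calc Q ^ q⁻¹ = G ^ q⁻¹ * (G⁻¹ * Q) ^ q⁻¹ := by
          rw [← Real.mul_rpow hG.le (mul_nonneg (inv_nonneg.2 hG.le) hQ₀),
            mul_inv_cancel_left₀ hG.ne']
      _ ≤ G ^ q⁻¹ * (C * (G⁻¹ * S)) := by gcongr
      _ = C * S * G ^ (q⁻¹ - 1) := by rw [Real.rpow_sub_one hG.ne']; ring
  rw [div_le_iff₀ hS]
  calc ∑ i ∈ A, v i * w i ≤ GA ^ (1 - q⁻¹) * (C * S * G ^ (q⁻¹ - 1)) := by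
        refine holder.trans ?_
        gcongr
        exact hQA.trans hQ
    _ = C * (GA / G) ^ (1 - q⁻¹) * S := by
        rw [Real.div_rpow hGA hG.le, div_eq_mul_inv, ← Real.rpow_neg hG.le, neg_sub]
        ring

theorem stmt12_general {X : Type*} [MeasurableSpace X] (μ : Measure X)
    (T : X → X)
    (g ω : X → ℝ) (hgpos : ∀ x, 0 < g x)
    (hωpos : ∀ x, 0 < ω x)
    (h : ∃ C q : ℝ, 1 < C ∧ 1 < q ∧ MemRHW μ T g ω C q) :
    MemACFW μ T g ω := by
  obtain ⟨C, q, hC, hq, hRH⟩ := h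
  refine ⟨C, 1 - q⁻¹, hC, sub_pos.2 (inv_lt_one_of_one_lt₀ hq),
    sub_lt_self _ (inv_pos.2 (zero_lt_one.trans hq)), ?_⟩
  filter_upwards [hRH] with x hx k hk A hA
  have hs : (range k).Nonempty := nonempty_range_iff.2 hk.ne'
  exact sum_mul_div_sum_le_of_reverse_holder hA (fun i => (hgpos _).le) (fun i => (hωpos _).le)
    (sum_pos (fun i _ => hgpos _) hs) (sum_pos (fun i _ => mul_pos (hωpos _) (hgpos _)) hs)
    hq.le (hx k hk)

theorem stmt12 {X : Type*} [MeasurableSpace X] (μ : Measure X)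
    [IsProbabilityMeasure μ] [NullSingletonClass μ] (hcomp : μ.IsComplete)
    (T : X → X) (hTbij : Function.Bijective T) (hTerg : Ergodic T μ)
    (g ω : X → ℝ) (hg : Measurable g) (hgpos : ∀ x, 0 < g x)
    (hω : Measurable ω) (hωpos : ∀ x, 0 < ω x)
    (h : ∃ C q : ℝ, 1 < C ∧ 1 < q ∧ MemRHW μ T g ω C q) :
    MemACFW μ T g ω :=
  stmt12_general μ T g ω hgpos hωpos h
end

section
/- Let ω be a weight. If ω ∈ A^exp_∞, then ω ∈ A^avg_∞. -/
open MeasureTheory Finset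

/-- `ω ∈ A^exp_∞`. -/
def MemAexp {X : Type*} [MeasurableSpace X] (μ : Measure X) (T : X → X) (ω : X → ℝ) : Prop :=
  ∃ C : ℝ, 0 < C ∧
    ∀ᵐ x ∂μ, ∀ k : ℕ, 0 < k →
      ((k : ℝ)⁻¹ * ∑ i ∈ Finset.range k, ω (T^[i] x)) *
        Real.exp ((k : ℝ)⁻¹ * ∑ i ∈ Finset.range k, Real.log (ω (T^[i] x))⁻¹) ≤ C

/-!
For `a, A > 0` the tangent-line bound `log (a / A) ≤ a / A - 1` makes every term of
`∑ᵢ (log aᵢ - log A - aᵢ / A + 1)` nonpositive, and when `A` is the mean of the `aᵢ` this sum is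
`∑ᵢ log aᵢ - k log A`. On the indices where `aᵢ ≤ γ A` the term is even at most `log γ + 1`, so the
proportion of those indices, times `-1 - log γ`, is bounded by the logarithm of the `A^exp_∞`
product. With `L ≥ max (log C) 1` and `γ = exp (-1 - 2L)` that proportion is at most `1 / 2`.
-/

open Real

namespace Real

theorem log_sub_log_sub_div_add_one_nonpos {a A : ℝ} (ha : 0 < a) (hA : 0 < A) :
    log a - log A - a / A + 1 ≤ 0 := by
  have := log_le_sub_one_of_pos (div_pos ha hA)
  rw [log_div ha.ne' hA.ne'] at this
  linarith

theorem log_sub_log_sub_div_add_one_le_of_le_mul {a A γ : ℝ} (ha : 0 < a) (hA : 0 < A)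
    (hγ : 0 < γ) (h : a ≤ γ * A) : log a - log A - a / A + 1 ≤ log γ + 1 := by
  have := log_le_log ha h
  rw [log_mul hγ.ne' hA.ne'] at this
  have : 0 ≤ a / A := (div_pos ha hA).le
  linarith

end Real

namespace Finset

variable {ι : Type*}

theorem sum_le_card_filter_nsmul_of_nonpos {M : Type*} [AddCommMonoid M] [PartialOrder M]
    [IsOrderedAddMonoid M] {s : Finset ι} {f : ι → M} {p : ι → Prop} [DecidablePred p] {c : M}
    (hf : ∀ i ∈ s, f i ≤ 0) (hp : ∀ i ∈ s, p i → f i ≤ c) :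
    ∑ i ∈ s, f i ≤ #(s.filter p) • c := by
  rw [← sum_filter_add_sum_filter_not s p, ← add_zero (#(s.filter p) • c)]
  gcongr
  · exact sum_le_card_nsmul _ _ _ fun i hi => hp i (mem_filter.mp hi).1 (mem_filter.mp hi).2
  · exact sum_nonpos fun i hi => hf i (mem_filter.mp hi).1

theorem card_filter_le_mul_mean_div_card_mul_le_log_mean_sub_mean_log {s : Finset ι}
    (hs : s.Nonempty) {a : ι → ℝ} (ha : ∀ i ∈ s, 0 < a i) {γ : ℝ} (hγ : 0 < γ) :
    #(s.filter fun i => a i ≤ γ * ((#s : ℝ)⁻¹ * ∑ j ∈ s, a j)) / (#s : ℝ) * (-1 - log γ) ≤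
      log ((#s : ℝ)⁻¹ * ∑ j ∈ s, a j) - (#s : ℝ)⁻¹ * ∑ i ∈ s, log (a i) := by
  set A := (#s : ℝ)⁻¹ * ∑ j ∈ s, a j
  have hcard : (0 : ℝ) < #s := Nat.cast_pos.mpr hs.card_pos
  have hA : 0 < A := mul_pos (inv_pos.mpr hcard) (sum_pos ha hs)
  have hgap : ∑ i ∈ s, (log (a i) - log A - a i / A + 1) ≤
      #(s.filter fun i => a i ≤ γ * A) • (log γ + 1) :=
    sum_le_card_filter_nsmul_of_nonpos
      (fun i hi => log_sub_log_sub_div_add_one_nonpos (ha i hi) hA)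
      fun i hi => log_sub_log_sub_div_add_one_le_of_le_mul (ha i hi) hA hγ
  have hmean : ∑ i ∈ s, a i / A = #s := by
    rw [← sum_div, div_eq_iff hA.ne', mul_inv_cancel_left₀ hcard.ne']
  simp only [sum_add_distrib, sum_sub_distrib, hmean, sum_const, nsmul_eq_mul] at hgap
  calc _ = -((#s : ℝ)⁻¹ * (#(s.filter fun i => a i ≤ γ * A) * (log γ + 1))) := by ring
    _ ≤ -((#s : ℝ)⁻¹ * (∑ i ∈ s, log (a i) - #s * log A - #s + #s * 1)) := by gcongr
    _ = log A - (#s : ℝ)⁻¹ * ∑ i ∈ s, log (a i) := by field_simp; ring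

end Finset

theorem stmt14_general {X : Type*} [MeasurableSpace X] (μ : Measure X)
    (T : X → X)
    (ω : X → ℝ) (hωpos : ∀ x, 0 < ω x)
    (h : MemAexp μ T ω) :
    MemAavg μ T ω := by
  obtain ⟨C, -, hC⟩ := h
  set L := max (log C) 1
  have hL : 0 < L := lt_max_of_lt_right one_pos
  refine ⟨exp (-1 - 2 * L), 1 / 2, exp_pos _, exp_lt_one_iff.mpr (by linarith), by norm_num,
    by norm_num, ?_⟩
  filter_upwards [hC] with x hx k hk
  have hs : (range k).Nonempty := nonempty_range_iff.mpr hk.ne'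
  have hA : 0 < (k : ℝ)⁻¹ * ∑ i ∈ range k, ω (T^[i] x) :=
    mul_pos (inv_pos.mpr (Nat.cast_pos.mpr hk)) (sum_pos (fun i _ => hωpos _) hs)
  have hlogC := log_le_log (by positivity) (hx k hk)
  simp only [log_mul hA.ne' (exp_pos _).ne', log_exp, log_inv, sum_neg_distrib, mul_neg] at hlogC
  have hgap := card_filter_le_mul_mean_div_card_mul_le_log_mean_sub_mean_log hs
    (fun i _ => hωpos (T^[i] x)) (exp_pos (-1 - 2 * L))
  rw [card_range, log_exp, show -1 - (-1 - 2 * L) = 2 * L by ring] at hgap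
  unfold ergAvg
  nlinarith [le_max_left (log C) 1]

theorem stmt14 {X : Type*} [MeasurableSpace X] (μ : Measure X)
    [IsProbabilityMeasure μ] [NullSingletonClass μ] (hcomp : μ.IsComplete)
    (T : X → X) (hTbij : Function.Bijective T) (hTerg : Ergodic T μ)
    (ω : X → ℝ) (hω : Measurable ω) (hωpos : ∀ x, 0 < ω x)
    (h : MemAexp μ T ω) :
    MemAavg μ T ω :=
  stmt14_general μ T ω hωpos h
end

section
/- Let ω be a weight. Then ω ∈ A^exp_∞ if and only if ω ∈ A^SW_∞. -/
open MeasureTheory Finset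

/-- `ω ∈ A^SW_∞`. -/
def MemASW {X : Type*} [MeasurableSpace X] (μ : Measure X) (T : X → X) (ω : X → ℝ) : Prop :=
  ∃ C : ℝ, 1 < C ∧
    ∀ s : ℝ, 0 < s → s < 1 →
      ∀ᵐ x ∂μ, ∀ k : ℕ, 0 < k →
        (k : ℝ)⁻¹ * ∑ i ∈ Finset.range k, ω (T^[i] x) ≤
          C * ((k : ℝ)⁻¹ * ∑ i ∈ Finset.range k, ω (T^[i] x) ^ s) ^ (1 / s)

/-!
`A^exp_∞` bounds the arithmetic mean of `ω` along an orbit segment by `C` times its geometric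
mean, `A^SW_∞` by `C` times its power means of exponent `s ∈ (0, 1)`. By Jensen's inequality the
power means dominate the geometric mean, and they converge to it as `s → 0⁺` (the derivative of
`s ↦ log (mean of aᵢ ^ s)` at `0` is the mean of `log aᵢ`), so the two bounds are equivalent.
-/

open Filter Topology

section Means

variable {ι : Type*} (t : Finset ι) (a : ι → ℝ)

noncomputable def geomMean : ℝ := Real.exp ((#t : ℝ)⁻¹ * ∑ i ∈ t, Real.log (a i))

noncomputable def powerMean (s : ℝ) : ℝ := ((#t : ℝ)⁻¹ * ∑ i ∈ t, a i ^ s) ^ (1 / s)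

variable {t a}

lemma geomMean_pos : 0 < geomMean t a := Real.exp_pos _

lemma exp_mean_log_inv :
    Real.exp ((#t : ℝ)⁻¹ * ∑ i ∈ t, Real.log (a i)⁻¹) = (geomMean t a)⁻¹ := by
  simp only [geomMean, Real.log_inv, sum_neg_distrib, mul_neg, Real.exp_neg]

lemma exp_mean_le_mean_exp (ht : t.Nonempty) (b : ι → ℝ) :
    Real.exp ((#t : ℝ)⁻¹ * ∑ i ∈ t, b i) ≤ (#t : ℝ)⁻¹ * ∑ i ∈ t, Real.exp (b i) := by
  have hcard : (0 : ℝ) < #t := by exact_mod_cast ht.card_pos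
  have := convexOn_exp.map_sum_le (t := t) (w := fun _ => (#t : ℝ)⁻¹) (p := b)
    (fun _ _ => by positivity) (by simp [hcard.ne']) (fun _ _ => Set.mem_univ _)
  simpa only [smul_eq_mul, ← mul_sum] using this

lemma mean_rpow_pos (ht : t.Nonempty) (ha : ∀ i ∈ t, 0 < a i) (s : ℝ) :
    0 < (#t : ℝ)⁻¹ * ∑ i ∈ t, a i ^ s := by
  have hcard : (0 : ℝ) < #t := by exact_mod_cast ht.card_pos
  exact mul_pos (inv_pos.2 hcard) (sum_pos (fun i hi => Real.rpow_pos_of_pos (ha i hi) s) ht)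

lemma geomMean_le_powerMean (ht : t.Nonempty) (ha : ∀ i ∈ t, 0 < a i) {s : ℝ} (hs : 0 < s) :
    geomMean t a ≤ powerMean t a s := by
  calc geomMean t a = Real.exp ((#t : ℝ)⁻¹ * ∑ i ∈ t, s * Real.log (a i)) ^ (1 / s) := by
        rw [geomMean, ← Real.exp_mul, ← mul_sum]
        congr 1
        field_simp
    _ ≤ ((#t : ℝ)⁻¹ * ∑ i ∈ t, Real.exp (s * Real.log (a i))) ^ (1 / s) :=
        Real.rpow_le_rpow (Real.exp_pos _).le (exp_mean_le_mean_exp ht _) (by positivity)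
    _ = powerMean t a s := by
        rw [powerMean]
        congr 2
        refine sum_congr rfl fun i hi => ?_
        rw [Real.rpow_def_of_pos (ha i hi), mul_comm]

lemma hasDerivAt_log_mean_rpow (ht : t.Nonempty) (ha : ∀ i ∈ t, 0 < a i) :
    HasDerivAt (fun s : ℝ => Real.log ((#t : ℝ)⁻¹ * ∑ i ∈ t, a i ^ s))
      ((#t : ℝ)⁻¹ * ∑ i ∈ t, Real.log (a i)) 0 := by
  have hcard : (#t : ℝ) ≠ 0 := by exact_mod_cast ht.card_pos.ne'
  have hsum : HasDerivAt (fun s : ℝ => (#t : ℝ)⁻¹ * ∑ i ∈ t, a i ^ s)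
      ((#t : ℝ)⁻¹ * ∑ i ∈ t, Real.log (a i)) 0 := by
    refine HasDerivAt.const_mul _ (HasDerivAt.fun_sum fun i hi => ?_)
    simpa using (Real.hasStrictDerivAt_const_rpow (ha i hi) 0).hasDerivAt
  have hone : (#t : ℝ)⁻¹ * ∑ i ∈ t, a i ^ (0 : ℝ) = 1 := by simp [hcard]
  have hlog := hsum.log (by rw [hone]; exact one_ne_zero)
  rwa [hone, div_one] at hlog

lemma tendsto_powerMean_nhdsGT_zero (ht : t.Nonempty) (ha : ∀ i ∈ t, 0 < a i) :
    Tendsto (powerMean t a) (𝓝[>] 0) (𝓝 (geomMean t a)) := by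
  have hslope := (hasDerivAt_log_mean_rpow ht ha).tendsto_slope_zero_right
  refine ((Real.continuous_exp.tendsto _).comp hslope).congr fun s => ?_
  have hcard : (#t : ℝ) ≠ 0 := by exact_mod_cast ht.card_pos.ne'
  simp [powerMean, Real.rpow_def_of_pos (mean_rpow_pos ht ha s), hcard, mul_comm]

end Means

lemma powerMean_range (k : ℕ) (a : ℕ → ℝ) (s : ℝ) :
    powerMean (range k) a s = ((k : ℝ)⁻¹ * ∑ i ∈ range k, a i ^ s) ^ (1 / s) := by
  rw [powerMean, card_range]

lemma mean_mul_exp_mean_log_inv_le_iff {k : ℕ} {a : ℕ → ℝ} {C : ℝ} :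
    ((k : ℝ)⁻¹ * ∑ i ∈ range k, a i) *
        Real.exp ((k : ℝ)⁻¹ * ∑ i ∈ range k, Real.log (a i)⁻¹) ≤ C ↔
      (k : ℝ)⁻¹ * ∑ i ∈ range k, a i ≤ C * geomMean (range k) a := by
  have hexp := exp_mean_log_inv (t := range k) (a := a)
  rw [card_range] at hexp
  rw [hexp, ← div_eq_mul_inv, div_le_iff₀ geomMean_pos]

theorem stmt16_general {X : Type*} [MeasurableSpace X] (μ : Measure X) (T : X → X)
    (ω : X → ℝ) (hωpos : ∀ x, 0 < ω x) :
    MemAexp μ T ω ↔ MemASW μ T ω := by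
  have ht : ∀ {k : ℕ}, 0 < k → (range k).Nonempty := fun hk => nonempty_range_iff.2 hk.ne'
  have ha : ∀ x k, ∀ i ∈ range k, 0 < ω (T^[i] x) := fun x _ i _ => hωpos _
  constructor
  · rintro ⟨C, hC, hae⟩
    refine ⟨C + 1, by linarith, fun s hs _ => ?_⟩
    filter_upwards [hae] with x hx k hk
    have hGP := geomMean_le_powerMean (ht hk) (ha x k) hs
    rw [← powerMean_range]
    calc _ ≤ C * geomMean (range k) fun i => ω (T^[i] x) :=
          mean_mul_exp_mean_log_inv_le_iff.1 (hx k hk)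
      _ ≤ C * powerMean (range k) (fun i => ω (T^[i] x)) s := by gcongr
      _ ≤ (C + 1) * powerMean (range k) (fun i => ω (T^[i] x)) s := by
          gcongr
          exacts [geomMean_pos.le.trans hGP, by linarith]
  · rintro ⟨C, hC, hsw⟩
    refine ⟨C, by linarith, ?_⟩
    obtain ⟨u, -, hu, hu0⟩ := exists_seq_strictAnti_tendsto' (zero_lt_one' ℝ)
    have hu0' : Tendsto u atTop (𝓝[>] 0) :=
      tendsto_nhdsWithin_iff.2 ⟨hu0, Eventually.of_forall fun n => (hu n).1⟩
    filter_upwards [ae_all_iff.2 fun n => hsw (u n) (hu n).1 (hu n).2] with x hx k hk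
    rw [mean_mul_exp_mean_log_inv_le_iff]
    refine ge_of_tendsto
      (((tendsto_powerMean_nhdsGT_zero (ht hk) (ha x k)).comp hu0').const_mul C)
      (Eventually.of_forall fun n => ?_)
    simpa only [Function.comp, powerMean_range] using hx n k hk

theorem stmt16 {X : Type*} [MeasurableSpace X] (μ : Measure X)
    [IsProbabilityMeasure μ] [NullSingletonClass μ] (hcomp : μ.IsComplete)
    (T : X → X) (hTbij : Function.Bijective T) (hTerg : Ergodic T μ)
    (ω : X → ℝ) (hω : Measurable ω) (hωpos : ∀ x, 0 < ω x)
     :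
    MemAexp μ T ω ↔ MemASW μ T ω :=
  stmt16_general μ T ω hωpos
end

section
/- Let ω be a weight. If ω ∈ A^exp_∞, then ω ∈ A^med_∞. -/
open MeasureTheory Finset

/-- `m` is a median of `ω` of length `k` at `x`. -/
def IsMedian {X : Type*} (T : X → X) (ω : X → ℝ) (k : ℕ) (x : X) (m : ℝ) : Prop :=
  (((Finset.range k).filter fun i => ω (T^[i] x) < m).card : ℝ) ≤ k / 2 ∧
  (((Finset.range k).filter fun i => m < ω (T^[i] x)).card : ℝ) ≤ k / 2

/-- `ω ∈ A^med_∞`. -/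
def MemAmed {X : Type*} [MeasurableSpace X] (μ : Measure X) (T : X → X) (ω : X → ℝ) : Prop :=
  ∃ C : ℝ, 1 < C ∧
    ∀ᵐ x ∂μ, ∀ k : ℕ, 0 < k → ∀ m : ℝ, IsMedian T ω k x m →
      ergAvg T ω k x ≤ C * m

/-!
Let `A` be the arithmetic mean of positive numbers `a₁, …, a_k` and `φ t = t - 1 - log t ≥ 0`.
Since the terms `aᵢ / A - 1` sum to zero, `∑ log (A / aᵢ) = ∑ φ (aᵢ / A)`, and the `A^exp_∞`
condition bounds the left side by `k log C`. As `φ t ≥ D - 1` for `t ≤ exp (-D)`, taking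
`D = 2 log⁺ C + 2` leaves fewer than `k / 2` of the `aᵢ` below `exp (-D) * A`. A median must lie
above that level, so `A ≤ exp D * m`.
-/

open Real

namespace Finset

variable {ι : Type*} {s : Finset ι} {a : ι → ℝ} {A : ℝ}

theorem sum_log_div_eq_sum_sub_one_sub_log (hA₀ : 0 < A)
    (hA : ∑ i ∈ s, a i = #s * A) :
    ∑ i ∈ s, log (A / a i) = ∑ i ∈ s, (a i / A - 1 - log (a i / A)) := by
  have hmean : ∑ i ∈ s, (a i / A - 1) = 0 := by
    rw [sum_sub_distrib, ← sum_div, hA, sum_const, nsmul_one]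
    field_simp
    ring
  rw [sum_sub_distrib, hmean, zero_sub, ← sum_neg_distrib]
  refine sum_congr rfl fun i _ => ?_
  rw [← log_inv, inv_div]

theorem card_filter_le_exp_neg_mul_sub_one_le_sum_log_div (ha : ∀ i ∈ s, 0 < a i)
    (hA₀ : 0 < A) (hA : ∑ i ∈ s, a i = #s * A) (D : ℝ) :
    #{i ∈ s | a i ≤ exp (-D) * A} * (D - 1) ≤ ∑ i ∈ s, log (A / a i) := by
  rw [sum_log_div_eq_sum_sub_one_sub_log hA₀ hA]
  have hφ_nonneg : ∀ i ∈ s, 0 ≤ a i / A - 1 - log (a i / A) := fun i hi => by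
    linarith [log_le_sub_one_of_pos (div_pos (ha i hi) hA₀)]
  calc (#{i ∈ s | a i ≤ exp (-D) * A} : ℝ) * (D - 1)
      ≤ ∑ i ∈ s with a i ≤ exp (-D) * A, (a i / A - 1 - log (a i / A)) := by
        rw [← nsmul_eq_mul]
        refine card_nsmul_le_sum _ _ _ fun i hi => ?_
        obtain ⟨hi, hsmall⟩ := mem_filter.mp hi
        have hlog : log (a i / A) ≤ -D := by
          rw [← log_exp (-D)]
          exact log_le_log (div_pos (ha i hi) hA₀) ((div_le_iff₀ hA₀).mpr hsmall)
        linarith [div_pos (ha i hi) hA₀]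
    _ ≤ ∑ i ∈ s, (a i / A - 1 - log (a i / A)) :=
        sum_le_sum_of_subset_of_nonneg (filter_subset _ _) fun i hi _ => hφ_nonneg i hi

theorem card_filter_le_exp_neg_mul_lt_half (ha : ∀ i ∈ s, 0 < a i) (hA₀ : 0 < A)
    (hA : ∑ i ∈ s, a i = #s * A) (hs : s.Nonempty) {L : ℝ} (hL : 0 ≤ L)
    (hlog : ∑ i ∈ s, log (A / a i) ≤ #s * L) :
    (#{i ∈ s | a i ≤ exp (-(2 * L + 2)) * A} : ℝ) < #s / 2 := by
  have hcard := card_filter_le_exp_neg_mul_sub_one_le_sum_log_div ha hA₀ hA (2 * L + 2)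
  have hs' : (0 : ℝ) < #s := by exact_mod_cast hs.card_pos
  nlinarith

theorem lt_of_card_filter_le_lt_half {m m' : ℝ}
    (hlow : (#{i ∈ s | a i ≤ m'} : ℝ) < #s / 2) (hhigh : (#{i ∈ s | m < a i} : ℝ) ≤ #s / 2) :
    m' < m := by
  by_contra! hle
  have hsub : #{i ∈ s | ¬ m < a i} ≤ #{i ∈ s | a i ≤ m'} :=
    card_le_card fun i hi => by
      simp only [mem_filter, not_lt] at hi ⊢
      exact ⟨hi.1, hi.2.trans hle⟩
  have hsplit : (#s : ℝ) = #{i ∈ s | m < a i} + #{i ∈ s | ¬ m < a i} := by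
    exact_mod_cast (card_filter_add_card_filter_not (s := s) (fun i => m < a i)).symm
  have hsub' : (#{i ∈ s | ¬ m < a i} : ℝ) ≤ #{i ∈ s | a i ≤ m'} := by exact_mod_cast hsub
  linarith

theorem sum_log_div_le_card_mul_log_of_mean_mul_exp_mean_log_inv_le (ha : ∀ i ∈ s, 0 < a i)
    (hs : s.Nonempty) {C : ℝ}
    (hC : ((#s : ℝ)⁻¹ * ∑ i ∈ s, a i) * exp ((#s : ℝ)⁻¹ * ∑ i ∈ s, log (a i)⁻¹) ≤ C) :
    ∑ i ∈ s, log (((#s : ℝ)⁻¹ * ∑ j ∈ s, a j) / a i) ≤ #s * log C := by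
  set A := (#s : ℝ)⁻¹ * ∑ j ∈ s, a j
  have hs' : (0 : ℝ) < #s := by exact_mod_cast hs.card_pos
  have hA₀ : 0 < A := mul_pos (inv_pos.mpr hs') (sum_pos ha hs)
  have hlogC := log_le_log (by positivity) hC
  rw [log_mul hA₀.ne' (exp_ne_zero _), log_exp] at hlogC
  have heq : ∑ i ∈ s, log (A / a i) = #s * (log A + (#s : ℝ)⁻¹ * ∑ i ∈ s, log (a i)⁻¹) := by
    rw [mul_add, ← mul_assoc, mul_inv_cancel₀ hs'.ne', one_mul, ← nsmul_eq_mul, ← sum_const,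
      ← sum_add_distrib]
    refine sum_congr rfl fun i hi => ?_
    rw [div_eq_mul_inv, log_mul hA₀.ne' (inv_pos.mpr (ha i hi)).ne']
  rw [heq]
  exact mul_le_mul_of_nonneg_left hlogC hs'.le

end Finset

theorem stmt17_general {X : Type*} [MeasurableSpace X] (μ : Measure X)
    (T : X → X)
    (ω : X → ℝ) (hωpos : ∀ x, 0 < ω x)
    (h : MemAexp μ T ω) :
    MemAmed μ T ω := by
  obtain ⟨C, hC, hae⟩ := h
  set L := max (log C) 0
  refine ⟨exp (2 * L + 2), one_lt_exp_iff.mpr (by positivity), ?_⟩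
  filter_upwards [hae] with x hx k hk m hm
  have hs : (range k).Nonempty := nonempty_range_iff.mpr hk.ne'
  have ha : ∀ i ∈ range k, 0 < ω (T^[i] x) := fun i _ => hωpos _
  have hA₀ : 0 < ergAvg T ω k x := by
    unfold ergAvg; have := sum_pos ha hs; positivity
  have hA : ∑ i ∈ range k, ω (T^[i] x) = #(range k) * ergAvg T ω k x := by
    rw [ergAvg, card_range]; field_simp
  have hlog : ∑ i ∈ range k, log (ergAvg T ω k x / ω (T^[i] x)) ≤ #(range k) * L := by
    have := sum_log_div_le_card_mul_log_of_mean_mul_exp_mean_log_inv_le ha hs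
      (by simpa only [card_range] using hx k hk)
    simp only [card_range] at this ⊢
    exact this.trans (mul_le_mul_of_nonneg_left (le_max_left _ _) k.cast_nonneg)
  have hsmall := card_filter_le_exp_neg_mul_lt_half ha hA₀ hA hs (le_max_right _ _) hlog
  have hmed : exp (-(2 * L + 2)) * ergAvg T ω k x < m :=
    lt_of_card_filter_le_lt_half hsmall (by simpa using hm.2)
  rw [exp_neg, inv_mul_lt_iff₀ (exp_pos _)] at hmed
  exact hmed.le

theorem stmt17 {X : Type*} [MeasurableSpace X] (μ : Measure X)
    [IsProbabilityMeasure μ] [NullSingletonClass μ] (hcomp : μ.IsComplete)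
    (T : X → X) (hTbij : Function.Bijective T) (hTerg : Ergodic T μ)
    (ω : X → ℝ) (hω : Measurable ω) (hωpos : ∀ x, 0 < ω x)
    (h : MemAexp μ T ω) :
    MemAmed μ T ω :=
  stmt17_general μ T ω hωpos h
end

section
/- Let ω be a weight. If ω ∈ A^med_∞, then ω ∈ A^M_∞. -/
/-!
Take `α = 1/4` and `β = 1 - 1/(4C)`. Given a window of length `k` and a set `A` of at most `k/4`
indices, pick a median `m` of the window. At most `k/2` values lie below `m`, so at least `k/4`
indices outside `A` carry a value `≥ m`; hence the complement of `A` carries mass at least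
`k m / 4 ≥ (1/(4C)) ∑ ω(Tⁱx)`, using `A^med_∞` in the form `∑ ω(Tⁱx) ≤ C k m`.
-/

open MeasureTheory Finset

-- The median is the least value `f i` such that at least half of the values are `≤ f i`.
theorem Finset.exists_mem_median {ι β : Type*} [LinearOrder β] {s : Finset ι} (hs : s.Nonempty)
    (f : ι → β) :
    ∃ i ∈ s, 2 * #{j ∈ s | f j < f i} ≤ #s ∧ 2 * #{j ∈ s | f i < f j} ≤ #s := by
  set W := {i ∈ s | #s ≤ 2 * #{j ∈ s | f j ≤ f i}}
  have hW : W.Nonempty := by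
    obtain ⟨i, hi, hmax⟩ := s.exists_max_image f hs
    refine ⟨i, mem_filter.2 ⟨hi, ?_⟩⟩
    rw [filter_true_of_mem hmax]
    omega
  obtain ⟨i, hiW, hmin⟩ := W.exists_min_image f hW
  obtain ⟨hi, hicard⟩ := mem_filter.1 hiW
  refine ⟨i, hi, ?_, ?_⟩
  · rcases ({j ∈ s | f j < f i} : Finset ι).eq_empty_or_nonempty with hL | hL
    · simp [hL]
    obtain ⟨j, hjL, hjmax⟩ := exists_max_image _ f hL
    obtain ⟨hj, hji⟩ := mem_filter.1 hjL
    have hjW : j ∉ W := fun hjW => (hmin j hjW).not_gt hji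
    have hLj : {l ∈ s | f l < f i} ⊆ {l ∈ s | f l ≤ f j} :=
      fun l hl => mem_filter.2 ⟨(mem_filter.1 hl).1, hjmax l hl⟩
    have := card_le_card hLj
    simp only [W, mem_filter, not_and, not_le] at hjW
    have := hjW hj
    omega
  · have hsplit := card_filter_add_card_filter_not (s := s) (p := fun j => f i < f j)
    simp only [not_lt] at hsplit
    omega

theorem exists_isMedian {X : Type*} (T : X → X) (ω : X → ℝ) (k : ℕ) (x : X) :
    ∃ m, IsMedian T ω k x m := by
  rcases k.eq_zero_or_pos with rfl | hk
  · exact ⟨0, by simp [IsMedian]⟩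
  obtain ⟨i, -, hlt, hgt⟩ :=
    (range k).exists_mem_median (nonempty_range_iff.2 hk.ne') fun i => ω (T^[i] x)
  rw [card_range] at hlt hgt
  refine ⟨ω (T^[i] x), ?_, ?_⟩ <;>
  · rw [le_div_iff₀ two_pos, mul_comm]
    exact_mod_cast ‹_›

-- At least a quarter of the indices lie outside `A` and have `m ≤ f i`.
theorem card_mul_le_four_mul_sum_sdiff {ι : Type*} [DecidableEq ι] {s A : Finset ι}
    {f : ι → ℝ} {m : ℝ}
    (hf : ∀ i ∈ s, 0 ≤ f i) (hm : 0 ≤ m) (hmed : (#{i ∈ s | f i < m} : ℝ) ≤ #s / 2)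
    (hA : A ⊆ s) (hAcard : (#A : ℝ) ≤ 1 / 4 * #s) :
    #s * m ≤ 4 * ∑ i ∈ s \ A, f i := by
  set B := {i ∈ s \ A | m ≤ f i}
  have hsplit : (#B : ℝ) + #{i ∈ s \ A | ¬ m ≤ f i} = #s - #A := by
    rw [← cast_card_sdiff hA]
    exact_mod_cast card_filter_add_card_filter_not _
  have hlow : (#{i ∈ s \ A | ¬ m ≤ f i} : ℝ) ≤ #{i ∈ s | f i < m} := by
    simp only [not_le]
    exact_mod_cast card_le_card (filter_subset_filter _ sdiff_subset)
  have hB : (#B : ℝ) * m ≤ ∑ i ∈ B, f i := by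
    simpa using card_nsmul_le_sum B f m fun i hi => (mem_filter.1 hi).2
  have hBsum : ∑ i ∈ B, f i ≤ ∑ i ∈ s \ A, f i :=
    sum_le_sum_of_subset_of_nonneg (filter_subset _ _)
      fun i hi _ => hf i (mem_sdiff.1 hi).1
  have hcard : (#s : ℝ) ≤ 4 * #B := by linarith
  nlinarith [mul_le_mul_of_nonneg_right hcard hm]

theorem sum_le_of_sum_le_mul_median {ι : Type*} [DecidableEq ι] {s A : Finset ι}
    {f : ι → ℝ} {C m : ℝ}
    (hf : ∀ i ∈ s, 0 ≤ f i) (hC : 0 < C) (hm : 0 ≤ m)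
    (hmed : (#{i ∈ s | f i < m} : ℝ) ≤ #s / 2) (hA : A ⊆ s)
    (hAcard : (#A : ℝ) ≤ 1 / 4 * #s) (hS : ∑ i ∈ s, f i ≤ C * (#s * m)) :
    ∑ i ∈ A, f i ≤ (1 - 1 / (4 * C)) * ∑ i ∈ s, f i := by
  have hsdiff := card_mul_le_four_mul_sum_sdiff hf hm hmed hA hAcard
  have hsum : ∑ i ∈ s \ A, f i + ∑ i ∈ A, f i = ∑ i ∈ s, f i := sum_sdiff hA
  have hquarter : (∑ i ∈ s, f i) / (4 * C) ≤ ∑ i ∈ s \ A, f i := by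
    rw [div_le_iff₀ (by positivity)]
    nlinarith
  rw [sub_mul, one_mul, ← mul_div_right_comm, one_mul]
  linarith

theorem stmt18_general {X : Type*} [MeasurableSpace X] (μ : Measure X)
    (T : X → X)
    (ω : X → ℝ) (hωpos : ∀ x, 0 < ω x)
    (h : MemAmed μ T ω) :
    MemAM μ T ω := by
  obtain ⟨C, hC, hae⟩ := h
  have hC0 : 0 < C := one_pos.trans hC
  refine ⟨1 / 4, 1 - 1 / (4 * C), by norm_num, by norm_num, ?_, ?_, ?_⟩
  · rw [sub_pos, div_lt_one (by positivity)]
    linarith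
  · simp only [sub_lt_self_iff, one_div, inv_pos]
    positivity
  filter_upwards [hae] with x hx k hk A hA hAcard
  obtain ⟨m, hmed⟩ := exists_isMedian T ω k x
  have hbound := hx k hk m hmed
  have hk' : (0 : ℝ) < k := Nat.cast_pos.2 hk
  have havg : 0 < ergAvg T ω k x :=
    mul_pos (inv_pos.2 hk') (sum_pos (fun i _ => hωpos _) (nonempty_range_iff.2 hk.ne'))
  have hm : 0 ≤ m := (pos_of_mul_pos_right (havg.trans_le hbound) hC0.le).le
  rw [ergAvg, inv_mul_le_iff₀ hk'] at hbound
  refine sum_le_of_sum_le_mul_median (fun i _ => (hωpos _).le) hC0 hm ?_ hA ?_ ?_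
  · simpa only [card_range] using hmed.1
  · simpa only [card_range] using hAcard
  · simpa only [card_range, mul_left_comm] using hbound

theorem stmt18 {X : Type*} [MeasurableSpace X] (μ : Measure X)
    [IsProbabilityMeasure μ] [NullSingletonClass μ] (hcomp : μ.IsComplete)
    (T : X → X) (hTbij : Function.Bijective T) (hTerg : Ergodic T μ)
    (ω : X → ℝ) (hω : Measurable ω) (hωpos : ∀ x, 0 < ω x)
    (h : MemAmed μ T ω) :
    MemAM μ T ω :=
  stmt18_general μ T ω hωpos h
end
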